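/- arXiv:2108.11052 — 4 statements merged into one kernel-verified Lean document; each statement's English description precedes it below -/
import Mathlib

section
/- (Lemma 4, upper bound) Let q, k > 0 be gains, c := 1/(μ√g), and define G₂(s) := max( 3H_max/2, μ²/G⁻¹(−cs), 3qk²/2, q, g ) for s ∈ [0,R). Then G₂ is non-decreasing and positive on [0,R), and for every (ξ,w,h,v) ∈ X the inequality V(ξ,w,h,v) ≤ G₂(V(ξ,w,h,v))·‖(ξ, w, h − h*·χ_{[0,L]}, v)‖_X² holds. -/
set_option linter.unusedVariables false
set_option maxHeartbeats 2000000

open Set MeasureTheory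

noncomputable def Gfun (hs : ℝ) (y : ℝ) : ℝ :=
  Real.sign (y - hs) * ((2/3) * y * Real.sqrt y - 2 * hs * Real.sqrt y + (4/3) * hs * Real.sqrt hs)

noncomputable def Ginv (hs : ℝ) (y : ℝ) : ℝ := Function.invFunOn (Gfun hs) (Set.Ioi 0) y

noncomputable def cconst (g μ : ℝ) : ℝ := 1 / (μ * Real.sqrt g)

def memS (L m : ℝ) (ξ w : ℝ) (h h' v : ℝ → ℝ) : Prop :=
  ContinuousOn h (Set.Icc 0 L) ∧
  (∀ x ∈ Set.Icc 0 L, 0 < h x) ∧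
  (∀ x ∈ Set.Icc 0 L, h x = h 0 + ∫ s in (0:ℝ)..x, h' s) ∧
  IntervalIntegrable (fun s => (h' s) ^ 2) MeasureTheory.volume 0 L ∧
  ContinuousOn v (Set.Icc 0 L) ∧ v 0 = 0 ∧ v L = 0 ∧
  (∫ x in (0:ℝ)..L, h x) = m

noncomputable def Efun (L g hs : ℝ) (h v : ℝ → ℝ) : ℝ :=
  (1/2) * (∫ x in (0:ℝ)..L, h x * (v x)^2) + (g/2) * (∫ x in (0:ℝ)..L, (h x - hs)^2)

noncomputable def Wfun (L g μ hs : ℝ) (h h' v : ℝ → ℝ) : ℝ :=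
  (1/2) * (∫ x in (0:ℝ)..L, (h x)⁻¹ * (h x * v x + μ * h' x)^2)
    + (g/2) * (∫ x in (0:ℝ)..L, (h x - hs)^2)

noncomputable def Vfun (L g μ hs q k : ℝ) (ξ w : ℝ) (h h' v : ℝ → ℝ) : ℝ :=
  Wfun L g μ hs h h' v + Efun L g hs h v + (q * k^2 / 2) * ξ^2 + (q/2) * (w + k*ξ)^2

noncomputable def Rconst (g μ hs Hmax : ℝ) : ℝ :=
  (2 * μ * Real.sqrt g / 3) * (2 * hs * Real.sqrt hs + Real.sqrt Hmax * min (Hmax - 3*hs) 0)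

def memX (L g μ m Hmax q k : ℝ) (ξ w : ℝ) (h h' v : ℝ → ℝ) : Prop :=
  memS L m ξ w h h' v ∧ Vfun L g μ (m/L) q k ξ w h h' v < Rconst g μ (m/L) Hmax

noncomputable def normX (L : ℝ) (ξ w : ℝ) (u u' v : ℝ → ℝ) : ℝ :=
  Real.sqrt (ξ^2 + w^2 + (∫ x in (0:ℝ)..L, (u x)^2)
    + (∫ x in (0:ℝ)..L, (u' x)^2) + (∫ x in (0:ℝ)..L, (v x)^2))

noncomputable def Gtwo (g μ hs Hmax q k : ℝ) (s : ℝ) : ℝ :=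
  max (max (3 * Hmax / 2) (μ^2 / Ginv hs (-(cconst g μ * s))))
      (max (3 * q * k^2 / 2) (max q g))


open intervalIntegral Filter Topology

noncomputable def auxF (hs y : ℝ) : ℝ :=
  (2/3) * y * Real.sqrt y - 2 * hs * Real.sqrt y + (4/3) * hs * Real.sqrt hs

lemma auxF_self (hs : ℝ) : auxF hs hs = 0 := by unfold auxF; ring

lemma auxF_diff (hs a b : ℝ) (ha : 0 ≤ a) (hb : 0 ≤ b) :
    auxF hs b - auxF hs a
      = (Real.sqrt b - Real.sqrt a) *
        ((2/3) * (b + Real.sqrt a * Real.sqrt b + a) - 2 * hs) := by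
  have hua : Real.sqrt a * Real.sqrt a = a := Real.mul_self_sqrt ha
  have hub : Real.sqrt b * Real.sqrt b = b := Real.mul_self_sqrt hb
  unfold auxF
  set u := Real.sqrt a with hu
  set v := Real.sqrt b with hv
  rw [← hua, ← hub]
  ring

lemma auxF_lt_of_le_hs (hs a b : ℝ) (hhs : 0 < hs) (ha : 0 < a) (hab : a < b) (hb : b ≤ hs) :
    auxF hs b < auxF hs a := by
  have h1 : Real.sqrt a < Real.sqrt b := Real.sqrt_lt_sqrt ha.le hab
  have h2 : Real.sqrt a * Real.sqrt a = a := Real.mul_self_sqrt ha.le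
  have h3 : Real.sqrt b * Real.sqrt b = b := Real.mul_self_sqrt (ha.le.trans hab.le)
  have h4 : Real.sqrt a ≥ 0 := Real.sqrt_nonneg a
  have key := auxF_diff hs a b ha.le (ha.le.trans hab.le)
  have huv : Real.sqrt a * Real.sqrt b ≤ b := by nlinarith
  have f2 : (2/3) * (b + Real.sqrt a * Real.sqrt b + a) - 2 * hs < 0 := by nlinarith
  have f1 : 0 < Real.sqrt b - Real.sqrt a := by linarith
  nlinarith [mul_neg_of_pos_of_neg f1 f2]

lemma auxF_lt_of_hs_le (hs a b : ℝ) (hhs : 0 < hs) (ha : hs ≤ a) (hab : a < b) :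
    auxF hs a < auxF hs b := by
  have ha0 : 0 < a := hhs.trans_le ha
  have h1 : Real.sqrt a < Real.sqrt b := Real.sqrt_lt_sqrt ha0.le hab
  have h2 : Real.sqrt a * Real.sqrt a = a := Real.mul_self_sqrt ha0.le
  have h3 : Real.sqrt b * Real.sqrt b = b := Real.mul_self_sqrt (ha0.le.trans hab.le)
  have h5 : Real.sqrt hs ≤ Real.sqrt a := Real.sqrt_le_sqrt ha
  have h6 : Real.sqrt hs * Real.sqrt hs = hs := Real.mul_self_sqrt hhs.le
  have h7 : 0 < Real.sqrt hs := Real.sqrt_pos.mpr hhs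
  have key := auxF_diff hs a b ha0.le (ha0.le.trans hab.le)
  have huv : hs ≤ Real.sqrt a * Real.sqrt b := by nlinarith
  have f2 : 0 < (2/3) * (b + Real.sqrt a * Real.sqrt b + a) - 2 * hs := by nlinarith
  have f1 : 0 < Real.sqrt b - Real.sqrt a := by linarith
  nlinarith [mul_pos f1 f2]

lemma auxF_pos_of_lt_hs (hs y : ℝ) (hhs : 0 < hs) (hy : 0 < y) (hyh : y < hs) :
    0 < auxF hs y := by
  have := auxF_lt_of_le_hs hs y hs hhs hy hyh le_rfl
  rw [auxF_self] at this; linarith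

lemma gfun_eq_neg (hs y : ℝ) (hhs : 0 < hs) (hy : 0 < y) (hyh : y ≤ hs) :
    Gfun hs y = -(auxF hs y) := by
  rcases eq_or_lt_of_le hyh with h | h
  · subst h
    rw [auxF_self]
    unfold Gfun
    simp
  · unfold Gfun
    rw [Real.sign_of_neg (by linarith)]
    unfold auxF; ring

lemma gfun_eq_pos (hs y : ℝ) (hyh : hs ≤ y) :
    Gfun hs y = auxF hs y := by
  rcases eq_or_lt_of_le hyh with h | h
  · subst h
    rw [auxF_self]
    unfold Gfun
    simp
  · unfold Gfun
    rw [Real.sign_of_pos (by linarith)]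
    unfold auxF; ring

lemma gfun_strictMonoOn (hs : ℝ) (hhs : 0 < hs) : StrictMonoOn (Gfun hs) (Set.Ioi 0) := by
  intro a ha b hb hab
  simp only [Set.mem_Ioi] at ha hb
  rcases le_or_gt b hs with h1 | h1
  · rw [gfun_eq_neg hs a hhs ha (hab.le.trans h1), gfun_eq_neg hs b hhs hb h1]
    have := auxF_lt_of_le_hs hs a b hhs ha hab h1
    linarith
  · rcases le_or_gt hs a with h2 | h2
    · rw [gfun_eq_pos hs a h2, gfun_eq_pos hs b (h2.trans hab.le)]
      exact auxF_lt_of_hs_le hs a b hhs h2 hab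
    · rw [gfun_eq_neg hs a hhs ha h2.le, gfun_eq_pos hs b h1.le]
      have h3 : 0 < auxF hs a := auxF_pos_of_lt_hs hs a hhs ha h2
      have h4 : auxF hs hs < auxF hs b := auxF_lt_of_hs_le hs hs b hhs le_rfl h1
      rw [auxF_self] at h4
      linarith

lemma gfun_self (hs : ℝ) (hhs : 0 < hs) : Gfun hs hs = 0 := by
  rw [gfun_eq_pos hs hs le_rfl, auxF_self]

lemma auxF_lt_top (hs y : ℝ) (hhs : 0 < hs) (hy : 0 < y) (hyh : y ≤ hs) :
    auxF hs y < (4/3) * hs * Real.sqrt hs := by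
  unfold auxF
  have h1 : 0 < Real.sqrt y := Real.sqrt_pos.mpr hy
  nlinarith [mul_pos h1 (show (0:ℝ) < 2*hs - (2/3)*y by linarith)]

/-- surjectivity onto Ioc (-(4/3) hs √hs) 0 -/
lemma gfun_surj (hs t : ℝ) (hhs : 0 < hs)
    (ht : t ∈ Set.Ioc (-((4:ℝ)/3 * hs * Real.sqrt hs)) 0) :
    ∃ y, 0 < y ∧ y ≤ hs ∧ Gfun hs y = t := by
  obtain ⟨ht1, ht2⟩ := ht
  have hcont : ContinuousOn (auxF hs) (Set.Icc 0 hs) := by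
    apply ContinuousOn.add
    apply ContinuousOn.sub
    · exact (continuousOn_const.mul continuousOn_id).mul Real.continuous_sqrt.continuousOn
    · exact continuousOn_const.mul Real.continuous_sqrt.continuousOn
    · exact continuousOn_const
  have h0 : auxF hs 0 = (4/3) * hs * Real.sqrt hs := by
    unfold auxF; simp [Real.sqrt_zero]
  have hIcc : Set.Icc (auxF hs hs) (auxF hs 0) ⊆ auxF hs '' Set.Icc 0 hs :=
    intermediate_value_Icc' hhs.le hcont
  have hmem : -t ∈ Set.Icc (auxF hs hs) (auxF hs 0) := by
    rw [auxF_self, h0]; constructor <;> linarith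
  obtain ⟨y, hy, hFy⟩ := hIcc hmem
  have hy0 : y ≠ 0 := by
    intro h; subst h
    rw [h0] at hFy; linarith
  refine ⟨y, lt_of_le_of_ne hy.1 (Ne.symm hy0), hy.2, ?_⟩
  rw [gfun_eq_neg hs y hhs (lt_of_le_of_ne hy.1 (Ne.symm hy0)) hy.2, hFy]; ring

lemma ginv_spec (hs t : ℝ) (hhs : 0 < hs)
    (ht : t ∈ Set.Ioc (-((4:ℝ)/3 * hs * Real.sqrt hs)) 0) :
    Gfun hs (Ginv hs t) = t ∧ 0 < Ginv hs t ∧ Ginv hs t ≤ hs := by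
  obtain ⟨y, hy0, hyh, hGy⟩ := gfun_surj hs t hhs ht
  have hex : ∃ a ∈ Set.Ioi (0:ℝ), Gfun hs a = t := ⟨y, Set.mem_Ioi.mpr hy0, hGy⟩
  have h1 : Gfun hs (Ginv hs t) = t := Function.invFunOn_eq hex
  have h2 : Ginv hs t ∈ Set.Ioi (0:ℝ) := Function.invFunOn_mem hex
  refine ⟨h1, h2, ?_⟩
  by_contra hc
  push_neg at hc
  have := gfun_strictMonoOn hs hhs (Set.mem_Ioi.mpr hhs) h2 hc
  rw [gfun_self hs hhs, h1] at this
  linarith [ht.2]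

lemma ginv_mono (hs t₁ t₂ : ℝ) (hhs : 0 < hs)
    (ht₁ : t₁ ∈ Set.Ioc (-((4:ℝ)/3 * hs * Real.sqrt hs)) 0)
    (ht₂ : t₂ ∈ Set.Ioc (-((4:ℝ)/3 * hs * Real.sqrt hs)) 0)
    (h12 : t₁ ≤ t₂) : Ginv hs t₁ ≤ Ginv hs t₂ := by
  obtain ⟨e1, p1, _⟩ := ginv_spec hs t₁ hhs ht₁
  obtain ⟨e2, p2, _⟩ := ginv_spec hs t₂ hhs ht₂
  by_contra hc
  push_neg at hc
  have := gfun_strictMonoOn hs hhs (Set.mem_Ioi.mpr p2) (Set.mem_Ioi.mpr p1) hc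
  rw [e1, e2] at this; linarith

lemma ginv_le_of_gfun_ge (hs t y : ℝ) (hhs : 0 < hs)
    (ht : t ∈ Set.Ioc (-((4:ℝ)/3 * hs * Real.sqrt hs)) 0)
    (hy : 0 < y) (hGy : t ≤ Gfun hs y) : Ginv hs t ≤ y := by
  obtain ⟨e1, p1, _⟩ := ginv_spec hs t hhs ht
  by_contra hc
  push_neg at hc
  have := gfun_strictMonoOn hs hhs (Set.mem_Ioi.mpr hy) (Set.mem_Ioi.mpr p1) hc
  rw [e1] at this; linarith


lemma junk_safe_mono (a b : ℝ) (hab : a ≤ b) (f g : ℝ → ℝ)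
    (hg : IntervalIntegrable g volume a b)
    (h0 : ∀ x ∈ Set.Icc a b, 0 ≤ f x) (hfg : ∀ x ∈ Set.Icc a b, f x ≤ g x) :
    (∫ x in a..b, f x) ≤ ∫ x in a..b, g x := by
  by_cases hf : IntervalIntegrable f volume a b
  · exact integral_mono_on hab hf hg hfg
  · rw [intervalIntegral.integral_undef hf]
    exact intervalIntegral.integral_nonneg hab (fun x hx => le_trans (h0 x hx) (hfg x hx))

lemma cs_interval (a b : ℝ) (hab : a ≤ b) (f g : ℝ → ℝ)
    (hf2 : IntervalIntegrable (fun x => f x ^ 2) volume a b)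
    (hg2 : IntervalIntegrable (fun x => g x ^ 2) volume a b)
    (hfg : IntervalIntegrable (fun x => f x * g x) volume a b) :
    (∫ x in a..b, f x * g x) ≤
      Real.sqrt (∫ x in a..b, f x ^ 2) * Real.sqrt (∫ x in a..b, g x ^ 2) := by
  set A := ∫ x in a..b, f x ^ 2 with hA'
  set B := ∫ x in a..b, g x ^ 2 with hB'
  set C := ∫ x in a..b, f x * g x with hC'
  have hA : 0 ≤ A := intervalIntegral.integral_nonneg hab (fun x _ => sq_nonneg _)
  have hB : 0 ≤ B := intervalIntegral.integral_nonneg hab (fun x _ => sq_nonneg _)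
  have key : ∀ t : ℝ, 0 ≤ t ^ 2 * A - 2 * t * C + B := by
    intro t
    have h2 : 0 ≤ ∫ x in a..b, (t * f x - g x) ^ 2 :=
      intervalIntegral.integral_nonneg hab (fun x _ => sq_nonneg _)
    have h1 : (fun x => (t * f x - g x) ^ 2)
        = fun x => (t ^ 2 * f x ^ 2 - 2 * t * (f x * g x)) + g x ^ 2 := by
      funext x; ring
    rw [h1] at h2
    rwa [intervalIntegral.integral_add ((hf2.const_mul (t ^ 2)).sub (hfg.const_mul (2 * t))) hg2,
      intervalIntegral.integral_sub (hf2.const_mul (t ^ 2)) (hfg.const_mul (2 * t)),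
      intervalIntegral.integral_const_mul, intervalIntegral.integral_const_mul] at h2
  have hCsq : C ^ 2 ≤ A * B := by
    rcases eq_or_lt_of_le hA with h | h
    · -- A = 0
      have hC0 : C = 0 := by
        by_contra hC
        have hval : 2 * ((B + 1) / (2 * C)) * C = B + 1 := by field_simp
        have hk := key ((B + 1) / (2 * C))
        rw [← h] at hk
        nlinarith [hk, hval]
      rw [hC0, ← h]; simp
    · have := key (C / A)
      have h2 : (C / A) ^ 2 * A - 2 * (C / A) * C + B = B - C ^ 2 / A := by
        field_simp; ring
      rw [h2] at this
      have h3 : C ^ 2 / A ≤ B := by linarith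
      rw [mul_comm]
      exact (div_le_iff₀ h).mp h3
  calc C ≤ |C| := le_abs_self C
    _ ≤ Real.sqrt (A * B) := by
        rw [← Real.sqrt_sq_eq_abs]
        exact Real.sqrt_le_sqrt hCsq
    _ = Real.sqrt A * Real.sqrt B := Real.sqrt_mul hA B

lemma sq_int_to_abs_int {c d : ℝ} {f : ℝ → ℝ}
    (h2 : IntegrableOn (fun s => f s ^ 2) (Set.Ioc c d) volume) :
    IntegrableOn (fun s => |f s|) (Set.Ioc c d) volume := by
  have hmeas : AEStronglyMeasurable (fun s => |f s|) (volume.restrict (Set.Ioc c d)) := by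
    have := Real.continuous_sqrt.comp_aestronglyMeasurable h2.aestronglyMeasurable
    refine this.congr (Filter.Eventually.of_forall fun s => ?_)
    simp [Real.sqrt_sq_eq_abs]
  have hbound : Integrable (fun s => (1 + f s ^ 2) / 2) (volume.restrict (Set.Ioc c d)) := by
    have h1 : IntegrableOn (fun _ : ℝ => (1:ℝ)) (Set.Ioc c d) volume :=
      integrableOn_const measure_Ioc_lt_top.ne
    exact ((h1.add h2).div_const 2)
  refine hbound.mono' hmeas (Filter.Eventually.of_forall fun s => ?_)
  rw [Real.norm_eq_abs, abs_abs]
  nlinarith [sq_nonneg (|f s| - 1), sq_abs (f s)]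

lemma abs_intervalIntegrable (a b : ℝ) (f : ℝ → ℝ)
    (h2 : IntervalIntegrable (fun s => f s ^ 2) volume a b) :
    IntervalIntegrable (fun s => |f s|) volume a b :=
  ⟨sq_int_to_abs_int h2.1, sq_int_to_abs_int h2.2⟩


lemma key_h_bound (L : ℝ) (h h' : ℝ → ℝ)
    (hc : ContinuousOn h (Set.Icc 0 L))
    (heq : ∀ x ∈ Set.Icc 0 L, h x = h 0 + ∫ s in (0:ℝ)..x, h' s)
    (habs : IntervalIntegrable (fun s => |h' s|) volume 0 L) :
    ∀ a b, a ∈ Set.Icc 0 L → b ∈ Set.Icc 0 L → a ≤ b →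
      |h b - h a| ≤ ∫ s in a..b, |h' s| := by
  intro a b ha hb hab
  have hL0 : (0:ℝ) ≤ L := ha.1.trans ha.2
  have hsub : ∀ c d : ℝ, c ∈ Set.Icc 0 L → d ∈ Set.Icc 0 L →
      Set.uIcc c d ⊆ Set.uIcc 0 L := by
    intro c d hc' hd'
    rw [Set.uIcc_of_le hL0]
    exact Set.uIcc_subset_Icc hc' hd'
  have habs' : ∀ c d : ℝ, c ∈ Set.Icc 0 L → d ∈ Set.Icc 0 L →
      IntervalIntegrable (fun s => |h' s|) volume c d :=
    fun c d hc' hd' => habs.mono_set (hsub c d hc' hd')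
  have hnn : ∀ c d : ℝ, c ≤ d → 0 ≤ ∫ s in c..d, |h' s| :=
    fun c d hcd => intervalIntegral.integral_nonneg hcd (fun _ _ => abs_nonneg _)
  -- monotonicity in upper endpoint
  have hmono : ∀ x : ℝ, x ∈ Set.Icc a b →
      (∫ s in a..x, |h' s|) ≤ ∫ s in a..b, |h' s| := by
    intro x hx
    have hxI : x ∈ Set.Icc 0 L := ⟨ha.1.trans hx.1, hx.2.trans hb.2⟩
    have h1 := integral_add_adjacent_intervals (habs' a x ha hxI) (habs' x b hxI hb)
    have h2 := hnn x b hx.2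
    linarith
  -- honest case as a general claim
  have honest : ∀ x : ℝ, x ∈ Set.Icc a b → IntervalIntegrable h' volume 0 x →
      |h x - h a| ≤ ∫ s in a..b, |h' s| := by
    intro x hx hIx
    have hxI : x ∈ Set.Icc 0 L := ⟨ha.1.trans hx.1, hx.2.trans hb.2⟩
    have hI0a : IntervalIntegrable h' volume 0 a :=
      hIx.mono_set (by
        rw [Set.uIcc_of_le ha.1, Set.uIcc_of_le (ha.1.trans hx.1)]
        exact Set.Icc_subset_Icc le_rfl hx.1)
    have hIax : IntervalIntegrable h' volume a x :=
      hIx.mono_set (by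
        rw [Set.uIcc_of_le hx.1, Set.uIcc_of_le (ha.1.trans hx.1)]
        exact Set.Icc_subset_Icc ha.1 le_rfl)
    have e : h x - h a = ∫ s in a..x, h' s := by
      have e1 := heq x hxI
      have e2 := heq a ha
      have e3 := integral_add_adjacent_intervals hI0a hIax
      linarith
    rw [e]
    calc |∫ s in a..x, h' s| ≤ ∫ s in a..x, |h' s| := abs_integral_le_integral_abs hx.1
      _ ≤ ∫ s in a..b, |h' s| := hmono x hx
  by_cases hb' : IntervalIntegrable h' volume 0 b
  · exact honest b ⟨hab, le_rfl⟩ hb'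
  by_cases ha' : IntervalIntegrable h' volume 0 a
  · -- sSup argument
    set J := {x : ℝ | x ∈ Set.Icc a b ∧ IntervalIntegrable h' volume 0 x} with hJ
    have hJa : a ∈ J := ⟨⟨le_rfl, hab⟩, ha'⟩
    have hJne : J.Nonempty := ⟨a, hJa⟩
    have hJbdd : BddAbove J := ⟨b, fun x hx => hx.1.2⟩
    set t := sSup J with ht
    have hta : a ≤ t := le_csSup hJbdd hJa
    have htb : t ≤ b := csSup_le hJne (fun x hx => hx.1.2)
    have htI : t ∈ Set.Icc 0 L := ⟨ha.1.trans hta, htb.trans hb.2⟩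
    -- sequence from the left
    have hseqmem : ∀ n : ℕ, max a (t - 1/(n+1)) ∈ J := by
      intro n
      rcases le_or_gt t (a + 1/(n+1)) with hcase | hcase
      · have : max a (t - 1/(n+1)) = a := max_eq_left (by linarith)
        rw [this]; exact hJa
      · have hx1 : a < t - 1/(n+1) := by linarith
        have : max a (t - 1/(n+1)) = t - 1/(n+1) := max_eq_right hx1.le
        rw [this]
        have hlt : t - 1/(n+1) < t := by
          have : (0:ℝ) < 1/(n+1) := by positivity
          linarith
        obtain ⟨j, hjJ, hjx⟩ := exists_lt_of_lt_csSup hJne hlt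
        refine ⟨⟨hx1.le, hjx.le.trans hjJ.1.2⟩, hjJ.2.mono_set ?_⟩
        rw [Set.uIcc_of_le (ha.1.trans hx1.le), Set.uIcc_of_le (ha.1.trans hjJ.1.1)]
        exact Set.Icc_subset_Icc le_rfl hjx.le
    have hseqlim : Tendsto (fun n : ℕ => max a (t - 1/(n+1))) atTop (𝓝 t) := by
      have h1 : Tendsto (fun n : ℕ => t - 1/(n+1)) atTop (𝓝 t) := by
        have := tendsto_one_div_add_atTop_nhds_zero_nat (𝕜 := ℝ)
        have h2 : Tendsto (fun n : ℕ => t - 1/(n+1)) atTop (𝓝 (t - 0)) :=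
          tendsto_const_nhds.sub (by exact_mod_cast this)
        simpa using h2
      have h2 := (tendsto_const_nhds : Tendsto (fun _ : ℕ => a) atTop (𝓝 a)).max h1
      rwa [max_eq_right hta] at h2
    have hmemIcc : ∀ n : ℕ, max a (t - 1/(n+1)) ∈ Set.Icc 0 L := by
      intro n
      have := hseqmem n
      exact ⟨ha.1.trans this.1.1, this.1.2.trans hb.2⟩
    have htend : Tendsto (fun n : ℕ => h (max a (t - 1/(n+1)))) atTop (𝓝 (h t)) := by
      apply (hc t htI).tendsto.comp
      rw [tendsto_nhdsWithin_iff]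
      exact ⟨hseqlim, Eventually.of_forall hmemIcc⟩
    have hht : |h t - h a| ≤ ∫ s in a..b, |h' s| := by
      have habstend : Tendsto (fun n : ℕ => |h (max a (t - 1/(n+1))) - h a|) atTop
          (𝓝 (|h t - h a|)) := (htend.sub tendsto_const_nhds).abs
      apply le_of_tendsto habstend
      exact Eventually.of_forall (fun n => honest _ (hseqmem n).1 (hseqmem n).2)
    rcases eq_or_lt_of_le htb with hteq | htlt
    · rwa [hteq] at hht
    · -- t < b : h b = h 0 and h t = h 0
      have hb0 : h b = h 0 := by
        rw [heq b hb, intervalIntegral.integral_undef hb']; ring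
      have hyval : ∀ n : ℕ, h (t + (b - t) * (1/(n+1))) = h 0 := by
        intro n
        set y := t + (b - t) * (1/(n+1)) with hy
        have hpos : (0:ℝ) < 1/(n+1) := by positivity
        have hy1 : t < y := by
          have := mul_pos (sub_pos.mpr htlt) hpos
          rw [hy]; linarith
        have hy2 : y ≤ b := by
          have h1 : (1:ℝ)/(n+1) ≤ 1 := by
            rw [div_le_one (by positivity)]
            simp
          have := mul_le_of_le_one_right (sub_nonneg.mpr htlt.le) h1
          rw [hy]; linarith
        have hyI : y ∈ Set.Icc 0 L := ⟨htI.1.trans hy1.le, hy2.trans hb.2⟩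
        have hnotI : ¬ IntervalIntegrable h' volume 0 y := by
          intro hII
          have : y ∈ J := ⟨⟨hta.trans hy1.le, hy2⟩, hII⟩
          have := le_csSup hJbdd this
          linarith
        rw [heq y hyI, intervalIntegral.integral_undef hnotI]; ring
      have hylim : Tendsto (fun n : ℕ => t + (b - t) * (1/(n+1))) atTop (𝓝 t) := by
        have h0 : Tendsto (fun n : ℕ => (1:ℝ)/(n+1)) atTop (𝓝 0) := by
          exact_mod_cast tendsto_one_div_add_atTop_nhds_zero_nat (𝕜 := ℝ)
        have h1 : Tendsto (fun n : ℕ => t + (b - t) * (1/(n+1))) atTop (𝓝 (t + (b-t)*0)) :=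
          tendsto_const_nhds.add (tendsto_const_nhds.mul h0)
        simpa using h1
      have hymem : ∀ n : ℕ, t + (b - t) * (1/(n+1)) ∈ Set.Icc 0 L := by
        intro n
        have hpos : (0:ℝ) < 1/(n+1) := by positivity
        have h1 : (1:ℝ)/(n+1) ≤ 1 := by
          rw [div_le_one (by positivity)]; simp
        have h2 := mul_le_of_le_one_right (sub_nonneg.mpr htlt.le) h1
        have h3 := mul_pos (sub_pos.mpr htlt) hpos
        constructor
        · linarith [htI.1]
        · linarith [hb.2]
      have hytend : Tendsto (fun n : ℕ => h (t + (b - t) * (1/(n+1)))) atTop (𝓝 (h t)) := by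
        apply (hc t htI).tendsto.comp
        rw [tendsto_nhdsWithin_iff]
        exact ⟨hylim, Eventually.of_forall hymem⟩
      have hth0 : h t = h 0 := by
        have hconst : Tendsto (fun n : ℕ => h (t + (b - t) * (1/(n+1)))) atTop (𝓝 (h 0)) := by
          simp only [hyval]
          exact tendsto_const_nhds
        exact tendsto_nhds_unique hytend hconst
      rw [hb0, ← hth0]
      exact hht
  · -- both junk
    have hb0 : h b = h 0 := by
      rw [heq b hb, intervalIntegral.integral_undef hb']; ring
    have ha0 : h a = h 0 := by
      rw [heq a ha, intervalIntegral.integral_undef ha']; ring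
    rw [hb0, ha0, sub_self, abs_zero]
    exact hnn a b hab


lemma chain_bound (L : ℝ) (h h' : ℝ → ℝ) (m₀ M₀ : ℝ) (hm : m₀ ≤ M₀)
    (hrange : ∀ x ∈ Set.Icc 0 L, h x ∈ Set.Icc m₀ M₀)
    (hc : ContinuousOn h (Set.Icc 0 L))
    (hkey : ∀ a b, a ∈ Set.Icc 0 L → b ∈ Set.Icc 0 L → a ≤ b →
      |h b - h a| ≤ ∫ s in a..b, |h' s|)
    (habs : IntervalIntegrable (fun s => |h' s|) volume 0 L)
    (Φ φ : ℝ → ℝ) (hφc : ContinuousOn φ (Set.Icc m₀ M₀))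
    (hΦ : ∀ p ∈ Set.Icc m₀ M₀, ∀ q ∈ Set.Icc m₀ M₀, Φ q - Φ p = ∫ u in p..q, φ u)
    (a b : ℝ) (ha : a ∈ Set.Icc 0 L) (hb : b ∈ Set.Icc 0 L) (hab : a ≤ b) :
    |Φ (h b) - Φ (h a)| ≤ ∫ s in a..b, |φ (h s)| * |h' s| := by
  have hL0 : (0:ℝ) ≤ L := ha.1.trans ha.2
  have habs' : ∀ c d : ℝ, c ∈ Set.Icc 0 L → d ∈ Set.Icc 0 L →
      IntervalIntegrable (fun s => |h' s|) volume c d := by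
    intro c d hc' hd'
    refine habs.mono_set ?_
    rw [Set.uIcc_of_le hL0]
    exact Set.uIcc_subset_Icc hc' hd'
  have hφh : ContinuousOn (fun x => |φ (h x)|) (Set.Icc 0 L) :=
    (hφc.comp hc (fun x hx => hrange x hx)).abs
  have hωint : ∀ c d : ℝ, c ∈ Set.Icc 0 L → d ∈ Set.Icc 0 L →
      IntervalIntegrable (fun s => |φ (h s)| * |h' s|) volume c d := by
    intro c d hc' hd'
    refine (habs' c d hc' hd').continuousOn_mul (hφh.mono ?_)
    exact Set.uIcc_subset_Icc hc' hd'
  have hnn : ∀ c d : ℝ, c ≤ d → 0 ≤ ∫ s in c..d, |h' s| :=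
    fun c d hcd => intervalIntegral.integral_nonneg hcd (fun _ _ => abs_nonneg _)
  have hIccsub : Set.Icc a b ⊆ Set.Icc 0 L := Set.Icc_subset_Icc ha.1 hb.2
  set C := ∫ s in a..b, |h' s| with hCdef
  have hC0 : 0 ≤ C := hnn a b hab
  have main : ∀ ε : ℝ, 0 < ε →
      |Φ (h b) - Φ (h a)| ≤ (∫ s in a..b, |φ (h s)| * |h' s|) + ε * (2 * C) := by
    intro ε hε
    set S := {x : ℝ | x ∈ Set.Icc a b ∧
      |Φ (h x) - Φ (h a)| ≤ (∫ s in a..x, |φ (h s)| * |h' s|)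
        + ε * (2 * ∫ s in a..x, |h' s|)} with hS
    -- continuity of Φ
    have hΦcont : ContinuousOn Φ (Set.Icc m₀ M₀) := by
      have hφint : IntegrableOn φ (Set.uIcc m₀ M₀) volume := by
        rw [Set.uIcc_of_le hm]
        exact hφc.integrableOn_Icc
      have hprim := intervalIntegral.continuousOn_primitive_interval hφint
      rw [Set.uIcc_of_le hm] at hprim
      have hcontf : ContinuousOn (fun q => Φ m₀ + ∫ u in m₀..q, φ u) (Set.Icc m₀ M₀) :=
        continuousOn_const.add hprim
      refine hcontf.congr ?_
      intro q hq
      have := hΦ m₀ ⟨le_rfl, hm⟩ q hq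
      simp only
      linarith
    have hΦh : ContinuousOn (fun x => Φ (h x)) (Set.Icc 0 L) :=
      hΦcont.comp hc (fun x hx => hrange x hx)
    -- continuity of the primitives
    have hcont1 : ContinuousOn (fun x => ∫ s in a..x, |φ (h s)| * |h' s|) (Set.Icc a b) := by
      have hint : IntegrableOn (fun s => |φ (h s)| * |h' s|) (Set.uIcc a b) volume := by
        rw [Set.uIcc_of_le hab]
        exact (intervalIntegrable_iff_integrableOn_Icc_of_le hab).mp (hωint a b ha hb)
      have := intervalIntegral.continuousOn_primitive_interval hint
      rwa [Set.uIcc_of_le hab] at this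
    have hcont2 : ContinuousOn (fun x => ∫ s in a..x, |h' s|) (Set.Icc a b) := by
      have hint : IntegrableOn (fun s => |h' s|) (Set.uIcc a b) volume := by
        rw [Set.uIcc_of_le hab]
        exact (intervalIntegrable_iff_integrableOn_Icc_of_le hab).mp (habs' a b ha hb)
      have := intervalIntegral.continuousOn_primitive_interval hint
      rwa [Set.uIcc_of_le hab] at this
    have hSclosed : IsClosed S := by
      have hcont3 : ContinuousOn (fun x => ((∫ s in a..x, |φ (h s)| * |h' s|)
          + ε * (2 * ∫ s in a..x, |h' s|)) - |Φ (h x) - Φ (h a)|) (Set.Icc a b) :=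
        (hcont1.add (continuousOn_const.mul (continuousOn_const.mul hcont2))).sub
          ((( hΦh.mono hIccsub).sub continuousOn_const).abs)
      have hkey2 := hcont3.preimage_isClosed_of_isClosed isClosed_Icc
        (isClosed_Ici (a := (0:ℝ)))
      have : S = Set.Icc a b ∩ (fun x => ((∫ s in a..x, |φ (h s)| * |h' s|)
          + ε * (2 * ∫ s in a..x, |h' s|)) - |Φ (h x) - Φ (h a)|) ⁻¹' Set.Ici 0 := by
        ext x
        simp only [hS, Set.mem_setOf_eq, Set.mem_inter_iff, Set.mem_preimage, Set.mem_Ici,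
          sub_nonneg]
      rw [this]
      exact hkey2
    have haS : a ∈ S := by
      refine ⟨⟨le_rfl, hab⟩, ?_⟩
      simp [intervalIntegral.integral_same]
    have hSne : S.Nonempty := ⟨a, haS⟩
    have hSbdd : BddAbove S := ⟨b, fun x hx => hx.1.2⟩
    set t := sSup S with htdef
    have htS : t ∈ S := hSclosed.csSup_mem hSne hSbdd
    have hta : a ≤ t := le_csSup hSbdd haS
    have htb : t ≤ b := htS.1.2
    have htL : t ∈ Set.Icc 0 L := hIccsub htS.1
    rcases eq_or_lt_of_le htb with hteq | htlt
    · have := htS.2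
      rw [hteq] at this
      exact this
    · exfalso
      obtain ⟨δ₁, hδ₁, hδprop⟩ := Metric.continuousWithinAt_iff.mp (hφc (h t) (hrange t htL)) ε hε
      obtain ⟨r, hr, hrprop⟩ := Metric.continuousWithinAt_iff.mp (hc t htL) δ₁ hδ₁
      set x := min b (t + r/2) with hxdef
      have htx : t < x := lt_min htlt (by linarith)
      have hxb : x ≤ b := min_le_left _ _
      have hxab : x ∈ Set.Icc a b := ⟨hta.trans htx.le, hxb⟩
      have hxL : x ∈ Set.Icc 0 L := hIccsub hxab
      have hclose : ∀ s, s ∈ Set.Icc t x → |h s - h t| < δ₁ := by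
        intro s hs
        have hsL : s ∈ Set.Icc 0 L := hIccsub ⟨hta.trans hs.1, hs.2.trans hxb⟩
        have hdist : dist s t < r := by
          rw [Real.dist_eq, abs_of_nonneg (by linarith [hs.1])]
          have hxr : x ≤ t + r/2 := min_le_right _ _
          linarith [hs.2]
        have := hrprop hsL hdist
        rwa [Real.dist_eq] at this
      have hφlow : ∀ s, s ∈ Set.Icc t x → |φ (h t)| - ε ≤ |φ (h s)| := by
        intro s hs
        have hsL : s ∈ Set.Icc 0 L := hIccsub ⟨hta.trans hs.1, hs.2.trans hxb⟩
        have hd := hδprop (hrange s hsL) (by rw [Real.dist_eq]; exact hclose s hs)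
        rw [Real.dist_eq] at hd
        have h1 := abs_sub_abs_le_abs_sub (φ (h s)) (φ (h t))
        have h2 := abs_sub_abs_le_abs_sub (φ (h t)) (φ (h s))
        rw [abs_sub_comm] at h2
        linarith
      have hΦx : Φ (h x) - Φ (h t) = ∫ u in (h t)..(h x), φ u :=
        hΦ (h t) (hrange t htL) (h x) (hrange x hxL)
      have hub : ∀ u ∈ Set.uIoc (h t) (h x), ‖φ u‖ ≤ |φ (h t)| + ε := by
        intro u hu
        have huIcc : u ∈ Set.uIcc (h t) (h x) := Set.uIoc_subset_uIcc hu
        have humem : u ∈ Set.Icc m₀ M₀ :=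
          Set.uIcc_subset_Icc (hrange t htL) (hrange x hxL) huIcc
        have hud : |u - h t| < δ₁ :=
          lt_of_le_of_lt (abs_sub_left_of_mem_uIcc huIcc) (hclose x ⟨htx.le, le_rfl⟩)
        have hd := hδprop humem (by rw [Real.dist_eq]; exact hud)
        rw [Real.dist_eq] at hd
        rw [Real.norm_eq_abs]
        have h1 := abs_sub_abs_le_abs_sub (φ u) (φ (h t))
        linarith
      have h2 : |Φ (h x) - Φ (h t)| ≤ (|φ (h t)| + ε) * |h x - h t| := by
        rw [hΦx]
        have := intervalIntegral.norm_integral_le_of_norm_le_const hub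
        rw [Real.norm_eq_abs] at this
        exact this
      have hD : |h x - h t| ≤ ∫ s in t..x, |h' s| := hkey t x htL hxL htx.le
      have hDnn : 0 ≤ ∫ s in t..x, |h' s| := hnn t x htx.le
      set c₀ := max (|φ (h t)| - ε) 0 with hc₀def
      have h4 : c₀ * (∫ s in t..x, |h' s|) ≤ ∫ s in t..x, |φ (h s)| * |h' s| := by
        rw [← intervalIntegral.integral_const_mul]
        apply intervalIntegral.integral_mono_on htx.le ((habs' t x htL hxL).const_mul c₀)
          (hωint t x htL hxL)
        intro s hs
        exact mul_le_mul_of_nonneg_right (max_le (hφlow s hs) (abs_nonneg _)) (abs_nonneg _)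
      have h5 : |Φ (h x) - Φ (h t)| ≤ (∫ s in t..x, |φ (h s)| * |h' s|)
          + ε * (2 * ∫ s in t..x, |h' s|) := by
        have e1 : |φ (h t)| + ε ≤ c₀ + 2 * ε := by
          have := le_max_left (|φ (h t)| - ε) 0
          linarith
        have e2 : (|φ (h t)| + ε) * |h x - h t| ≤ (|φ (h t)| + ε) * (∫ s in t..x, |h' s|) :=
          mul_le_mul_of_nonneg_left hD (by positivity)
        have e3 : (|φ (h t)| + ε) * (∫ s in t..x, |h' s|) ≤ (c₀ + 2*ε) * (∫ s in t..x, |h' s|) :=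
          mul_le_mul_of_nonneg_right e1 hDnn
        nlinarith [h2, h4]
      have hadd1 := integral_add_adjacent_intervals (hωint a t ha htL) (hωint t x htL hxL)
      have hadd2 := integral_add_adjacent_intervals (habs' a t ha htL) (habs' t x htL hxL)
      have hxS : x ∈ S := by
        refine ⟨hxab, ?_⟩
        have htri := abs_sub_le (Φ (h x)) (Φ (h t)) (Φ (h a))
        have h6 := htS.2
        have hadd2' : ε * (2 * ∫ s in a..t, |h' s|) + ε * (2 * ∫ s in t..x, |h' s|)
            = ε * (2 * ∫ s in a..x, |h' s|) := by rw [← hadd2]; ring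
        linarith [h5, h6, hadd1, hadd2', htri]
      have := le_csSup hSbdd hxS
      linarith
  -- conclude
  by_contra hcon
  push_neg at hcon
  set d := |Φ (h b) - Φ (h a)| - (∫ s in a..b, |φ (h s)| * |h' s|) with hddef
  have hd : 0 < d := by simp only [hddef]; linarith
  have hmain := main (d / (2 * (2 * C + 1))) (by positivity)
  have hfrac : d / (2 * (2 * C + 1)) * (2 * C) < d := by
    rw [div_mul_eq_mul_div, div_lt_iff₀ (by positivity)]
    nlinarith
  simp only [hddef] at hfrac
  linarith


lemma exists_eq_avg (L hs : ℝ) (hL : 0 < L) (h : ℝ → ℝ) (hc : ContinuousOn h (Set.Icc 0 L))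
    (hint : (∫ x in (0:ℝ)..L, (h x - hs)) = 0) : ∃ x₀ ∈ Set.Icc 0 L, h x₀ = hs := by
  by_contra hcon
  push_neg at hcon
  have hII : IntervalIntegrable (fun x => h x - hs) volume 0 L := by
    apply ContinuousOn.intervalIntegrable
    rw [Set.uIcc_of_le hL.le]
    exact hc.sub continuousOn_const
  have hsign : (∀ x ∈ Set.Icc 0 L, hs < h x) ∨ ∀ x ∈ Set.Icc 0 L, h x < hs := by
    by_contra hc2
    push_neg at hc2
    obtain ⟨⟨x₁, hx₁, hx₁le⟩, ⟨x₂, hx₂, hx₂ge⟩⟩ := hc2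
    have h1 : h x₁ < hs := lt_of_le_of_ne hx₁le (hcon x₁ hx₁)
    have h2 : hs < h x₂ := lt_of_le_of_ne hx₂ge (fun e => (hcon x₂ hx₂) e.symm)
    have hsub : Set.uIcc x₁ x₂ ⊆ Set.Icc 0 L := Set.uIcc_subset_Icc hx₁ hx₂
    have := intermediate_value_uIcc (hc.mono hsub)
    have hmem : hs ∈ Set.uIcc (h x₁) (h x₂) := by
      rw [Set.mem_uIcc]; left; exact ⟨h1.le, h2.le⟩
    obtain ⟨x₀, hx₀, hx₀eq⟩ := this hmem
    exact hcon x₀ (hsub hx₀) hx₀eq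
  rcases hsign with hsgn | hsgn
  · have : 0 < ∫ x in (0:ℝ)..L, (h x - hs) := by
      apply intervalIntegral_pos_of_pos_on hII _ hL
      intro x hx
      have := hsgn x ⟨hx.1.le, hx.2.le⟩
      linarith
    linarith [hint, this]
  · have : 0 < ∫ x in (0:ℝ)..L, (hs - h x) := by
      apply intervalIntegral_pos_of_pos_on _ _ hL
      · have : (fun x => hs - h x) = fun x => -(h x - hs) := by funext x; ring
        rw [this]; exact hII.neg
      · intro x hx
        have := hsgn x ⟨hx.1.le, hx.2.le⟩
        linarith
    have heq2 : (∫ x in (0:ℝ)..L, (hs - h x)) = -∫ x in (0:ℝ)..L, (h x - hs) := by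
      rw [← intervalIntegral.integral_neg]
      congr 1; funext x; ring
    rw [heq2, hint] at this
    linarith

lemma ftc_phi1 (hs p q : ℝ) :
    (q - hs)^2/2 - (p - hs)^2/2 = ∫ u in p..q, (u - hs) := by
  have hker : ∀ u ∈ Set.uIcc p q, HasDerivAt (fun y => (y - hs)^2/2) (u - hs) u := by
    intro u _
    have h1 : HasDerivAt (fun y => (y - hs)^2) (2 * (u - hs)^(2-1) * 1) u :=
      ((hasDerivAt_id u).sub_const hs).pow 2
    have h2 : HasDerivAt (fun y => (y - hs)^2/2) (2 * (u - hs)^(2-1) * 1 / 2) u := h1.div_const 2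
    convert h2 using 1
    ring
  have hint : IntervalIntegrable (fun u => u - hs) volume p q :=
    (continuous_id.sub continuous_const).intervalIntegrable p q
  exact (intervalIntegral.integral_eq_sub_of_hasDerivAt hker hint).symm

lemma ftc_auxF (hs m₀ p q : ℝ) (hm₀ : 0 < m₀) (hp : m₀ ≤ p) (hq : m₀ ≤ q) :
    auxF hs q - auxF hs p = ∫ u in p..q, (u - hs)/Real.sqrt u := by
  have hposu : ∀ u ∈ Set.uIcc p q, 0 < u := by
    intro u hu
    exact lt_of_lt_of_le hm₀ ((le_min hp hq).trans hu.1)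
  have hker : ∀ u ∈ Set.uIcc p q, HasDerivAt (auxF hs) ((u - hs)/Real.sqrt u) u := by
    intro u hu
    have hu0 : 0 < u := hposu u hu
    have hsqpos : 0 < Real.sqrt u := Real.sqrt_pos.mpr hu0
    have h1 : HasDerivAt Real.sqrt (1/(2*Real.sqrt u)) u := Real.hasDerivAt_sqrt (ne_of_gt hu0)
    have h2 : HasDerivAt (fun y => y * Real.sqrt y)
        (1 * Real.sqrt u + u * (1/(2*Real.sqrt u))) u := (hasDerivAt_id u).mul h1
    have h3 : HasDerivAt (fun y => (2/3) * (y * Real.sqrt y) - 2*hs*Real.sqrt y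
        + (4/3)*hs*Real.sqrt hs)
        ((2/3) * (1 * Real.sqrt u + u * (1/(2*Real.sqrt u))) - 2*hs*(1/(2*Real.sqrt u))) u :=
      ((h2.const_mul (2/3)).sub (h1.const_mul (2*hs))).add_const _
    have heqf : (fun y => (2/3) * (y * Real.sqrt y) - 2*hs*Real.sqrt y + (4/3)*hs*Real.sqrt hs)
        = auxF hs := by
      funext y; unfold auxF; ring
    rw [heqf] at h3
    convert h3 using 1
    have e1 : u * (1 / (2*Real.sqrt u)) = Real.sqrt u / 2 := by
      rw [mul_one_div, show (2:ℝ)*Real.sqrt u = Real.sqrt u * 2 by ring, ← div_div,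
        Real.div_sqrt]
    have husq : Real.sqrt u * Real.sqrt u = u := Real.mul_self_sqrt hu0.le
    rw [sub_div, Real.div_sqrt, e1]
    field_simp
    ring
  have hint : IntervalIntegrable (fun u => (u - hs)/Real.sqrt u) volume p q := by
    apply ContinuousOn.intervalIntegrable
    apply ContinuousOn.div
    · exact continuousOn_id.sub continuousOn_const
    · exact Real.continuous_sqrt.continuousOn
    · intro u hu; exact ne_of_gt (Real.sqrt_pos.mpr (hposu u hu))
  exact (intervalIntegral.integral_eq_sub_of_hasDerivAt hker hint).symm

lemma gfun_abs (hs y : ℝ) (hhs : 0 < hs) (hy : 0 < y) : |Gfun hs y| = |auxF hs y| := by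
  rcases le_total y hs with h | h
  · rw [gfun_eq_neg hs y hhs hy h, abs_neg]
  · rw [gfun_eq_pos hs y h]

lemma cs_general (a b : ℝ) (hab : a ≤ b) (X Y Z : ℝ → ℝ)
    (hX : IntervalIntegrable X volume a b) (hY : IntervalIntegrable Y volume a b)
    (hZ : IntervalIntegrable Z volume a b)
    (hX0 : ∀ x ∈ Set.Icc a b, 0 ≤ X x) (hY0 : ∀ x ∈ Set.Icc a b, 0 ≤ Y x)
    (hptw : ∀ t : ℝ, ∀ x ∈ Set.Icc a b, 0 ≤ t^2 * X x - 2*t*Z x + Y x) :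
    (∫ x in a..b, Z x) ≤
      Real.sqrt (∫ x in a..b, X x) * Real.sqrt (∫ x in a..b, Y x) := by
  set A := ∫ x in a..b, X x with hA'
  set B := ∫ x in a..b, Y x with hB'
  set C := ∫ x in a..b, Z x with hC'
  have hA : 0 ≤ A := intervalIntegral.integral_nonneg hab hX0
  have hB : 0 ≤ B := intervalIntegral.integral_nonneg hab hY0
  have key : ∀ t : ℝ, 0 ≤ t ^ 2 * A - 2 * t * C + B := by
    intro t
    have h2 : 0 ≤ ∫ x in a..b, (t^2 * X x - 2*t*Z x + Y x) :=
      intervalIntegral.integral_nonneg hab (hptw t)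
    rwa [intervalIntegral.integral_add ((hX.const_mul (t ^ 2)).sub (hZ.const_mul (2 * t))) hY,
      intervalIntegral.integral_sub (hX.const_mul (t ^ 2)) (hZ.const_mul (2 * t)),
      intervalIntegral.integral_const_mul, intervalIntegral.integral_const_mul] at h2
  have hCsq : C ^ 2 ≤ A * B := by
    rcases eq_or_lt_of_le hA with h | h
    · have hC0 : C = 0 := by
        by_contra hC
        have hval : 2 * ((B + 1) / (2 * C)) * C = B + 1 := by field_simp
        have hk := key ((B + 1) / (2 * C))
        rw [← h] at hk
        nlinarith [hk, hval]
      rw [hC0, ← h]; simp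
    · have := key (C / A)
      have h2 : (C / A) ^ 2 * A - 2 * (C / A) * C + B = B - C ^ 2 / A := by
        field_simp; ring
      rw [h2] at this
      have h3 : C ^ 2 / A ≤ B := by linarith
      rw [mul_comm]
      exact (div_le_iff₀ h).mp h3
  calc C ≤ |C| := le_abs_self C
    _ ≤ Real.sqrt (A * B) := by
        rw [← Real.sqrt_sq_eq_abs]
        exact Real.sqrt_le_sqrt hCsq
    _ = Real.sqrt A * Real.sqrt B := Real.sqrt_mul hA B


lemma aux_quad (q k M ξ w : ℝ) (hq : 0 < q) (hm3 : 3*q*k^2/2 ≤ M) (hm4 : q ≤ M) :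
    (q*k^2/2)*ξ^2 + (q/2)*(w + k*ξ)^2 ≤ M*ξ^2 + M*w^2 := by
  have h1 : (w + k*ξ)^2 ≤ 2*w^2 + 2*k^2*ξ^2 := by nlinarith [sq_nonneg (w - k*ξ)]
  have h2 : (q/2)*(w + k*ξ)^2 ≤ (q/2)*(2*w^2 + 2*k^2*ξ^2) :=
    mul_le_mul_of_nonneg_left h1 (by positivity)
  have h3 : (3*q*k^2/2)*ξ^2 ≤ M*ξ^2 := mul_le_mul_of_nonneg_right hm3 (sq_nonneg ξ)
  have h4 : q*w^2 ≤ M*w^2 := mul_le_mul_of_nonneg_right hm4 (sq_nonneg w)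
  nlinarith [h2, h3, h4]

lemma aux_iw_up (H vv d μ : ℝ) (hH : 0 < H) :
    H⁻¹*(H*vv + μ*d)^2 ≤ 2*(H*vv^2) + 2*μ^2*(d^2*H⁻¹) := by
  have e : H⁻¹*(H*vv)^2 = H*vv^2 := by
    rw [show (H*vv)^2 = H*(H*vv^2) by ring, inv_mul_cancel_left₀ (ne_of_gt hH)]
  have base : (H*vv + μ*d)^2 ≤ 2*(H*vv)^2 + 2*(μ*d)^2 := by
    nlinarith [sq_nonneg (H*vv - μ*d)]
  have hb2 := mul_le_mul_of_nonneg_left base (inv_nonneg.mpr hH.le)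
  nlinarith [hb2, e]

lemma aux_low (H vv d μ : ℝ) (hH : 0 < H) :
    (μ^2/4)*(d^2*H⁻¹) ≤ (1/2)*(H⁻¹*(H*vv + μ*d)^2) + (1/2)*(H*vv^2) := by
  have e : H⁻¹*(H*vv)^2 = H*vv^2 := by
    rw [show (H*vv)^2 = H*(H*vv^2) by ring, inv_mul_cancel_left₀ (ne_of_gt hH)]
  have base : (μ*d)^2 ≤ 2*(H*vv + μ*d)^2 + 2*(H*vv)^2 := by
    nlinarith [sq_nonneg (2*(H*vv) + μ*d)]
  have hb2 := mul_le_mul_of_nonneg_left base (inv_nonneg.mpr hH.le)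
  nlinarith [hb2, e]

lemma aux_amgm (μ g A B : ℝ) (hμ : 0 < μ) (hg : 0 < g) (hA : 0 ≤ A) (hB : 0 ≤ B) :
    μ*Real.sqrt g*(Real.sqrt A*Real.sqrt B) ≤ (μ^2/4)*B + g*A := by
  nlinarith [sq_nonneg (μ/2*Real.sqrt B - Real.sqrt g*Real.sqrt A),
    Real.sq_sqrt hB, Real.sq_sqrt hA, Real.sq_sqrt hg.le,
    Real.sqrt_nonneg A, Real.sqrt_nonneg B, Real.sqrt_nonneg g, hμ.le,
    mul_nonneg (Real.sqrt_nonneg A) (Real.sqrt_nonneg B)]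

lemma aux_cs2 (t a d H : ℝ) (hH : 0 < H) :
    0 ≤ t^2*a^2 - 2*t*(|a/Real.sqrt H| * |d|) + d^2*H⁻¹ := by
  have hsh : 0 < Real.sqrt H := Real.sqrt_pos.mpr hH
  have eZ : |a/Real.sqrt H| * |d| = |a| * |d| * (Real.sqrt H)⁻¹ := by
    rw [abs_div, abs_of_pos hsh]; ring
  have hsq2 : (Real.sqrt H)⁻¹^2 = H⁻¹ := by
    rw [← Real.sqrt_inv]
    exact Real.sq_sqrt (inv_nonneg.mpr hH.le)
  have hinv2 : d^2*H⁻¹ = (|d| * (Real.sqrt H)⁻¹)^2 := by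
    rw [mul_pow, sq_abs, hsq2]
  have key : t^2*a^2 - 2*t*(|a/Real.sqrt H| * |d|) + d^2*H⁻¹
      = (t*|a| - |d| * (Real.sqrt H)⁻¹)^2 := by
    rw [eZ, hinv2]
    linear_combination (-(t^2)) * sq_abs a
  rw [key]
  exact sq_nonneg _

lemma aux_cs1 (t a d : ℝ) : 0 ≤ t^2*a^2 - 2*t*(|a| * |d|) + d^2 := by
  nlinarith [sq_nonneg (t*|a| - |d|), sq_abs a, sq_abs d]

theorem stmt9 (L g μ m Hmax q k : ℝ) (hL : 0 < L) (hg : 0 < g) (hμ : 0 < μ) (hm : 0 < m)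
    (hHmax : 0 < Hmax) (hhs : m / L < Hmax) (hq : 0 < q) (hk : 0 < k) :
    MonotoneOn (Gtwo g μ (m/L) Hmax q k) (Set.Ico 0 (Rconst g μ (m/L) Hmax)) ∧
    (∀ s ∈ Set.Ico 0 (Rconst g μ (m/L) Hmax), 0 < Gtwo g μ (m/L) Hmax q k s) ∧
    (∀ ξ w : ℝ, ∀ h h' v : ℝ → ℝ, memX L g μ m Hmax q k ξ w h h' v →
      Vfun L g μ (m/L) q k ξ w h h' v ≤
        Gtwo g μ (m/L) Hmax q k (Vfun L g μ (m/L) q k ξ w h h' v) *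
          (normX L ξ w (fun x => h x - m/L) h' v)^2) := by
  have hL0 : (0:ℝ) ≤ L := hL.le
  set hs := m / L with hhsdef
  clear_value hs
  have hhs0 : 0 < hs := by rw [hhsdef]; exact div_pos hm hL
  have hμg : 0 < μ * Real.sqrt g := by positivity
  have hc0 : 0 < cconst g μ := by unfold cconst; positivity
  have hcR : cconst g μ * Rconst g μ hs Hmax
      = (2/3) * (2*hs*Real.sqrt hs + Real.sqrt Hmax * min (Hmax - 3*hs) 0) := by
    unfold cconst Rconst
    have : Real.sqrt g ≠ 0 := ne_of_gt (Real.sqrt_pos.mpr hg)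
    field_simp
  have hminle : Real.sqrt Hmax * min (Hmax - 3*hs) 0 ≤ 0 :=
    mul_nonpos_of_nonneg_of_nonpos (Real.sqrt_nonneg _) (min_le_right _ _)
  have hsqhs0 : 0 ≤ hs * Real.sqrt hs := by positivity
  have hcRle : cconst g μ * Rconst g μ hs Hmax ≤ (4:ℝ)/3 * hs * Real.sqrt hs := by
    rw [hcR]; nlinarith [hminle, hsqhs0]
  have hdom : ∀ s : ℝ, 0 ≤ s → s < Rconst g μ hs Hmax →
      -(cconst g μ * s) ∈ Set.Ioc (-((4:ℝ)/3 * hs * Real.sqrt hs)) 0 := by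
    intro s h0 hsR
    constructor
    · have h1 : cconst g μ * s < cconst g μ * Rconst g μ hs Hmax :=
        mul_lt_mul_of_pos_left hsR hc0
      have : (4:ℝ)/3 * hs * Real.sqrt hs = (4:ℝ)/3 * (hs * Real.sqrt hs) := by ring
      linarith [hcRle]
    · have := mul_nonneg hc0.le h0
      linarith
  refine ⟨?_, ?_, ?_⟩
  · -- monotone
    intro s1 hs1 s2 hs2 h12
    have hd1 := hdom s1 hs1.1 hs1.2
    have hd2 := hdom s2 hs2.1 hs2.2
    obtain ⟨e1, p1, l1⟩ := ginv_spec hs _ hhs0 hd1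
    obtain ⟨e2, p2, l2⟩ := ginv_spec hs _ hhs0 hd2
    have hneg : -(cconst g μ * s2) ≤ -(cconst g μ * s1) := by
      have := mul_le_mul_of_nonneg_left h12 hc0.le
      linarith
    have hmono := ginv_mono hs _ _ hhs0 hd2 hd1 hneg
    have hdiv : μ^2 / Ginv hs (-(cconst g μ * s1)) ≤ μ^2 / Ginv hs (-(cconst g μ * s2)) := by
      gcongr
    unfold Gtwo
    exact max_le_max (max_le_max le_rfl hdiv) le_rfl
  · intro s hsI
    have hle : g ≤ Gtwo g μ hs Hmax q k s := by
      unfold Gtwo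
      exact le_trans (le_trans (le_max_right q g) (le_max_right _ _)) (le_max_right _ _)
    linarith
  · intro ξ w h h' v hmem
    obtain ⟨⟨hcont, hpos, heq, hsq, hvcont, hv00, hvL0, hintm⟩, hVR⟩ := hmem
    rw [← hhsdef] at hVR
    set V := Vfun L g μ hs q k ξ w h h' v with hVdef
    set M := Gtwo g μ hs Hmax q k V with hMdef
    clear_value V M
    have hIIc : ∀ {f : ℝ → ℝ}, ContinuousOn f (Set.Icc 0 L) →
        IntervalIntegrable f volume 0 L := by
      intro f hf
      apply ContinuousOn.intervalIntegrable
      rwa [Set.uIcc_of_le hL0]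
    have hvc2 : ContinuousOn (fun x => (v x)^2) (Set.Icc 0 L) := hvcont.pow 2
    have hhc2 : ContinuousOn (fun x => (h x - hs)^2) (Set.Icc 0 L) :=
      (hcont.sub continuousOn_const).pow 2
    have hhv2 : ContinuousOn (fun x => h x * (v x)^2) (Set.Icc 0 L) := hcont.mul hvc2
    have hinvh : ContinuousOn (fun x => (h x)⁻¹) (Set.Icc 0 L) :=
      hcont.inv₀ (fun x hx => ne_of_gt (hpos x hx))
    have iiA := hIIc hhc2
    have iiT := hIIc hvc2
    have iiIhv := hIIc hhv2
    have iiB : IntervalIntegrable (fun x => (h' x)^2 * (h x)⁻¹) volume 0 L := by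
      apply hsq.mul_continuousOn
      rwa [Set.uIcc_of_le hL0]
    have habs := abs_intervalIntegrable 0 L h' hsq
    have hA0 : 0 ≤ ∫ x in (0:ℝ)..L, (h x - hs)^2 :=
      intervalIntegral.integral_nonneg hL0 (fun x _ => sq_nonneg _)
    have hT0 : 0 ≤ ∫ x in (0:ℝ)..L, (v x)^2 :=
      intervalIntegral.integral_nonneg hL0 (fun x _ => sq_nonneg _)
    have hB'0 : 0 ≤ ∫ x in (0:ℝ)..L, (h' x)^2 :=
      intervalIntegral.integral_nonneg hL0 (fun x _ => sq_nonneg _)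
    have hB0 : 0 ≤ ∫ x in (0:ℝ)..L, (h' x)^2 * (h x)⁻¹ :=
      intervalIntegral.integral_nonneg hL0
        (fun x hx => mul_nonneg (sq_nonneg _) (inv_nonneg.mpr (hpos x hx).le))
    have hIhv0 : 0 ≤ ∫ x in (0:ℝ)..L, h x * (v x)^2 :=
      intervalIntegral.integral_nonneg hL0
        (fun x hx => mul_nonneg (hpos x hx).le (sq_nonneg _))
    have hIw0 : 0 ≤ ∫ x in (0:ℝ)..L, (h x)⁻¹ * (h x * v x + μ * h' x)^2 :=
      intervalIntegral.integral_nonneg hL0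
        (fun x hx => mul_nonneg (inv_nonneg.mpr (hpos x hx).le) (sq_nonneg _))
    have hquadnn1 : 0 ≤ (q*k^2/2)*ξ^2 := by positivity
    have hquadnn2 : 0 ≤ (q/2)*(w + k*ξ)^2 := by positivity
    have hVexp : V = (1/2)*(∫ x in (0:ℝ)..L, (h x)⁻¹ * (h x * v x + μ * h' x)^2)
        + g*(∫ x in (0:ℝ)..L, (h x - hs)^2)
        + (1/2)*(∫ x in (0:ℝ)..L, h x * (v x)^2)
        + ((q*k^2/2)*ξ^2 + (q/2)*(w + k*ξ)^2) := by
      rw [hVdef]; simp only [Vfun, Wfun, Efun]; ring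
    have hgA0 : 0 ≤ g*(∫ x in (0:ℝ)..L, (h x - hs)^2) := mul_nonneg hg.le hA0
    have hV0 : 0 ≤ V := by
      rw [hVexp]
      linarith only [hIw0, hgA0, hIhv0, hquadnn1, hquadnn2]
    have hdomV := hdom V hV0 hVR
    obtain ⟨hGiEq, hGiPos, hGiLe⟩ := ginv_spec hs _ hhs0 hdomV
    have hm1 : 3 * Hmax / 2 ≤ M := by
      rw [hMdef]; unfold Gtwo; exact le_trans (le_max_left _ _) (le_max_left _ _)
    have hm2 : μ^2 / Ginv hs (-(cconst g μ * V)) ≤ M := by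
      rw [hMdef]; unfold Gtwo; exact le_trans (le_max_right _ _) (le_max_left _ _)
    have hm3 : 3 * q * k^2 / 2 ≤ M := by
      rw [hMdef]; unfold Gtwo; exact le_trans (le_max_left _ _) (le_max_right _ _)
    have hm4 : q ≤ M := by
      rw [hMdef]; unfold Gtwo
      exact le_trans (le_trans (le_max_left q g) (le_max_right _ _)) (le_max_right _ _)
    have hm5 : g ≤ M := by
      rw [hMdef]; unfold Gtwo
      exact le_trans (le_trans (le_max_right q g) (le_max_right _ _)) (le_max_right _ _)
    have hM0 : 0 < M := lt_of_lt_of_le hg hm5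
    have hnormsq : (normX L ξ w (fun x => h x - hs) h' v)^2
        = ξ^2 + w^2 + (∫ x in (0:ℝ)..L, (h x - hs)^2) + (∫ x in (0:ℝ)..L, (h' x)^2)
          + (∫ x in (0:ℝ)..L, (v x)^2) := by
      have hxx : 0 ≤ ξ^2 + w^2 + (∫ x in (0:ℝ)..L, (h x - hs)^2)
          + (∫ x in (0:ℝ)..L, (h' x)^2) + (∫ x in (0:ℝ)..L, (v x)^2) := by
        linarith [hA0, hB'0, hT0, sq_nonneg ξ, sq_nonneg w]
      simp only [normX]
      exact Real.sq_sqrt hxx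
    have hquad : (q*k^2/2)*ξ^2 + (q/2)*(w + k*ξ)^2 ≤ M*ξ^2 + M*w^2 :=
      aux_quad q k M ξ w hq hm3 hm4
    have hint0 : (∫ x in (0:ℝ)..L, (h x - hs)) = 0 := by
      rw [intervalIntegral.integral_sub (hIIc hcont) intervalIntegrable_const]
      rw [hintm, intervalIntegral.integral_const]
      rw [smul_eq_mul, hhsdef]
      field_simp
      ring
    obtain ⟨x₀, hx₀I, hx₀⟩ := exists_eq_avg L hs hL h hcont hint0
    have hkeyb := key_h_bound L h h' hcont heq habs
    obtain ⟨xm, hxmI, hxmmin⟩ := isCompact_Icc.exists_isMinOn (Set.nonempty_Icc.mpr hL0) hcont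
    obtain ⟨xM, hxMI, hxMmax⟩ := isCompact_Icc.exists_isMaxOn (Set.nonempty_Icc.mpr hL0) hcont
    have hm₀pos : 0 < h xm := hpos xm hxmI
    have hrange : ∀ x ∈ Set.Icc 0 L, h x ∈ Set.Icc (h xm) (h xM) :=
      fun x hx => ⟨hxmmin hx, hxMmax hx⟩
    have hm0M : h xm ≤ h xM := (hrange xm hxmI).2
    -- extension helper
    have hext : ∀ (f : ℝ → ℝ),
        (∀ c d, c ∈ Set.Icc 0 L → d ∈ Set.Icc 0 L → IntervalIntegrable f volume c d) →
        (∀ x ∈ Set.Icc 0 L, 0 ≤ f x) →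
        ∀ c d, c ∈ Set.Icc 0 L → d ∈ Set.Icc 0 L → c ≤ d →
        (∫ s in c..d, f s) ≤ ∫ s in (0:ℝ)..L, f s := by
      intro f hII hf0 c d hc hd hcd
      have h0L : (0:ℝ) ∈ Set.Icc (0:ℝ) L := ⟨le_rfl, hL0⟩
      have hLL : L ∈ Set.Icc (0:ℝ) L := ⟨hL0, le_rfl⟩
      have e1 := intervalIntegral.integral_add_adjacent_intervals (hII 0 c h0L hc) (hII c d hc hd)
      have e2 := intervalIntegral.integral_add_adjacent_intervals (hII 0 d h0L hd) (hII d L hd hLL)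
      have n1 : 0 ≤ ∫ s in (0:ℝ)..c, f s :=
        intervalIntegral.integral_nonneg hc.1 (fun x hx => hf0 x ⟨hx.1, hx.2.trans hc.2⟩)
      have n2 : 0 ≤ ∫ s in d..L, f s :=
        intervalIntegral.integral_nonneg hd.2 (fun x hx => hf0 x ⟨hd.1.trans hx.1, hx.2⟩)
      linarith
    have hsubII : ∀ (f : ℝ → ℝ), IntervalIntegrable f volume 0 L →
        ∀ c d, c ∈ Set.Icc 0 L → d ∈ Set.Icc 0 L → IntervalIntegrable f volume c d := by
      intro f hf c d hc hd
      refine hf.mono_set ?_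
      rw [Set.uIcc_of_le hL0]
      exact Set.uIcc_subset_Icc hc hd
    -- Iw upper bound (always)
    have hIwup : (∫ x in (0:ℝ)..L, (h x)⁻¹ * (h x * v x + μ * h' x)^2)
        ≤ ∫ x in (0:ℝ)..L, (2*(h x * (v x)^2) + 2*μ^2*((h' x)^2 * (h x)⁻¹)) := by
      apply junk_safe_mono 0 L hL0 _ _ ((iiIhv.const_mul 2).add (iiB.const_mul (2*μ^2)))
      · intro x hx
        exact mul_nonneg (inv_nonneg.mpr (hpos x hx).le) (sq_nonneg _)
      · intro x hx
        exact aux_iw_up (h x) (v x) (h' x) μ (hpos x hx)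
    have hIwup2 : (∫ x in (0:ℝ)..L, (2*(h x * (v x)^2) + 2*μ^2*((h' x)^2 * (h x)⁻¹)))
        = 2*(∫ x in (0:ℝ)..L, h x * (v x)^2) + 2*μ^2*(∫ x in (0:ℝ)..L, (h' x)^2 * (h x)⁻¹) := by
      rw [intervalIntegral.integral_add (iiIhv.const_mul 2) (iiB.const_mul (2*μ^2)),
        intervalIntegral.integral_const_mul, intervalIntegral.integral_const_mul]
    by_cases hIw : IntervalIntegrable (fun x => (h x)⁻¹ * (h x * v x + μ * h' x)^2) volume 0 L
    · -- MAIN CASE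
      -- lower bound on Iw + Ihv
      have lower1 : (μ^2/4)*(∫ x in (0:ℝ)..L, (h' x)^2 * (h x)⁻¹)
          ≤ (1/2)*(∫ x in (0:ℝ)..L, (h x)⁻¹ * (h x * v x + μ * h' x)^2)
            + (1/2)*(∫ x in (0:ℝ)..L, h x * (v x)^2) := by
        have hptw : ∀ x ∈ Set.Icc 0 L, (μ^2/4)*((h' x)^2 * (h x)⁻¹)
            ≤ (1/2)*((h x)⁻¹ * (h x * v x + μ * h' x)^2) + (1/2)*(h x * (v x)^2) :=
          fun x hx => aux_low (h x) (v x) (h' x) μ (hpos x hx)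
        have him := intervalIntegral.integral_mono_on hL0 (iiB.const_mul (μ^2/4))
          ((hIw.const_mul (1/2)).add (iiIhv.const_mul (1/2))) hptw
        rwa [intervalIntegral.integral_const_mul,
          intervalIntegral.integral_add (hIw.const_mul (1/2)) (iiIhv.const_mul (1/2)),
          intervalIntegral.integral_const_mul, intervalIntegral.integral_const_mul] at him
      -- AM-GM
      have hAMGM : μ*Real.sqrt g*(Real.sqrt (∫ x in (0:ℝ)..L, (h x - hs)^2)
            * Real.sqrt (∫ x in (0:ℝ)..L, (h' x)^2 * (h x)⁻¹))
          ≤ (μ^2/4)*(∫ x in (0:ℝ)..L, (h' x)^2 * (h x)⁻¹)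
            + g*(∫ x in (0:ℝ)..L, (h x - hs)^2) :=
        aux_amgm μ g _ _ hμ hg hA0 hB0
      have hABV : μ*Real.sqrt g*(Real.sqrt (∫ x in (0:ℝ)..L, (h x - hs)^2)
            * Real.sqrt (∫ x in (0:ℝ)..L, (h' x)^2 * (h x)⁻¹)) ≤ V := by
        rw [hVexp]
        linarith only [lower1, hAMGM, hquadnn1, hquadnn2]
      have hABcV : Real.sqrt (∫ x in (0:ℝ)..L, (h x - hs)^2)
            * Real.sqrt (∫ x in (0:ℝ)..L, (h' x)^2 * (h x)⁻¹) ≤ cconst g μ * V := by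
        have e : cconst g μ * V = V / (μ*Real.sqrt g) := by unfold cconst; ring
        rw [e, le_div_iff₀ hμg]
        linarith only [hABV]
      -- chain bound for auxF
      have hφ₂cont : ContinuousOn (fun u => (u - hs)/Real.sqrt u) (Set.Icc (h xm) (h xM)) := by
        apply ContinuousOn.div
        · exact continuousOn_id.sub continuousOn_const
        · exact Real.continuous_sqrt.continuousOn
        · intro u hu
          exact ne_of_gt (Real.sqrt_pos.mpr (lt_of_lt_of_le hm₀pos hu.1))
      have hΦ₂ : ∀ p ∈ Set.Icc (h xm) (h xM), ∀ q' ∈ Set.Icc (h xm) (h xM),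
          auxF hs q' - auxF hs p = ∫ u in p..q', (u - hs)/Real.sqrt u :=
        fun p hp q' hq' => ftc_auxF hs (h xm) p q' hm₀pos hp.1 hq'.1
      have hω₂II : ∀ c d, c ∈ Set.Icc 0 L → d ∈ Set.Icc 0 L →
          IntervalIntegrable (fun s => |(h s - hs)/Real.sqrt (h s)| * |h' s|) volume c d := by
        intro c d hc hd
        apply (hsubII _ habs c d hc hd).continuousOn_mul
        apply ContinuousOn.abs
        apply ContinuousOn.mono (hφ₂cont.comp hcont hrange) (Set.uIcc_subset_Icc hc hd)
      have hω₂0 : ∀ x ∈ Set.Icc 0 L, 0 ≤ |(h x - hs)/Real.sqrt (h x)| * |h' x| :=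
        fun x _ => mul_nonneg (abs_nonneg _) (abs_nonneg _)
      have chainA : ∀ x ∈ Set.Icc 0 L, |auxF hs (h x)|
          ≤ ∫ s in (0:ℝ)..L, |(h s - hs)/Real.sqrt (h s)| * |h' s| := by
        intro x hx
        rcases le_total x₀ x with hod | hod
        · have hcb : |auxF hs (h x) - auxF hs (h x₀)|
              ≤ ∫ s in x₀..x, |(h s - hs)/Real.sqrt (h s)| * |h' s| :=
            chain_bound L h h' (h xm) (h xM) hm0M hrange hcont hkeyb habs
              (auxF hs) (fun u => (u - hs)/Real.sqrt u) hφ₂cont hΦ₂ x₀ x hx₀I hx hod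
          rw [hx₀, auxF_self, sub_zero] at hcb
          exact hcb.trans (hext _ hω₂II hω₂0 x₀ x hx₀I hx hod)
        · have hcb : |auxF hs (h x₀) - auxF hs (h x)|
              ≤ ∫ s in x..x₀, |(h s - hs)/Real.sqrt (h s)| * |h' s| :=
            chain_bound L h h' (h xm) (h xM) hm0M hrange hcont hkeyb habs
              (auxF hs) (fun u => (u - hs)/Real.sqrt u) hφ₂cont hΦ₂ x x₀ hx hx₀I hod
          rw [hx₀, auxF_self, zero_sub, abs_neg] at hcb
          exact hcb.trans (hext _ hω₂II hω₂0 x x₀ hx hx₀I hod)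
      -- Cauchy-Schwarz for the chain integral
      have hcs2 : (∫ s in (0:ℝ)..L, |(h s - hs)/Real.sqrt (h s)| * |h' s|)
          ≤ Real.sqrt (∫ x in (0:ℝ)..L, (h x - hs)^2)
            * Real.sqrt (∫ x in (0:ℝ)..L, (h' x)^2 * (h x)⁻¹) := by
        apply cs_general 0 L hL0 _ _ _ iiA iiB (hω₂II 0 L ⟨le_rfl, hL0⟩ ⟨hL0, le_rfl⟩)
          (fun x _ => sq_nonneg _)
          (fun x hx => mul_nonneg (sq_nonneg _) (inv_nonneg.mpr (hpos x hx).le))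
        intro t x hx
        exact aux_cs2 t (h x - hs) (h' x) (h x) (hpos x hx)
      have hGb : ∀ x ∈ Set.Icc 0 L, |Gfun hs (h x)| ≤ cconst g μ * V := by
        intro x hx
        rw [gfun_abs hs (h x) hhs0 (hpos x hx)]
        exact le_trans (chainA x hx) (le_trans hcs2 hABcV)
      -- pointwise bounds
      have h_upper : ∀ x ∈ Set.Icc 0 L, h x ≤ Hmax := by
        intro x hx
        by_contra hcon
        push_neg at hcon
        have hGH : Gfun hs Hmax < Gfun hs (h x) :=
          gfun_strictMonoOn hs hhs0 (Set.mem_Ioi.mpr hHmax) (Set.mem_Ioi.mpr (hpos x hx)) hcon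
        have h1 : Gfun hs (h x) ≤ cconst g μ * V :=
          le_trans (le_abs_self _) (hGb x hx)
        have h2 : cconst g μ * V < cconst g μ * Rconst g μ hs Hmax :=
          mul_lt_mul_of_pos_left hVR hc0
        have h3 : cconst g μ * Rconst g μ hs Hmax ≤ Gfun hs Hmax := by
          rw [hcR, gfun_eq_pos hs Hmax (le_of_lt hhs)]
          unfold auxF
          have hmin2 := mul_le_mul_of_nonneg_left (min_le_left (Hmax - 3*hs) 0)
            (Real.sqrt_nonneg Hmax)
          linarith only [hmin2]
        linarith only [hGH, h1, h2, h3]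
      have h_lower : ∀ x ∈ Set.Icc 0 L, Ginv hs (-(cconst g μ * V)) ≤ h x := by
        intro x hx
        apply ginv_le_of_gfun_ge hs _ _ hhs0 hdomV (hpos x hx)
        have h1 := hGb x hx
        have h2 := neg_abs_le (Gfun hs (h x))
        linarith only [h1, h2]
      -- integral comparisons
      have hIhvHmax : (∫ x in (0:ℝ)..L, h x * (v x)^2) ≤ Hmax * ∫ x in (0:ℝ)..L, (v x)^2 := by
        have := intervalIntegral.integral_mono_on hL0 iiIhv (iiT.const_mul Hmax)
          (fun x hx => mul_le_mul_of_nonneg_right (h_upper x hx) (sq_nonneg _))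
        rwa [intervalIntegral.integral_const_mul] at this
      have hBle : (∫ x in (0:ℝ)..L, (h' x)^2 * (h x)⁻¹)
          ≤ (Ginv hs (-(cconst g μ * V)))⁻¹ * ∫ x in (0:ℝ)..L, (h' x)^2 := by
        have hptw : ∀ x ∈ Set.Icc 0 L, (h' x)^2 * (h x)⁻¹
            ≤ (Ginv hs (-(cconst g μ * V)))⁻¹ * (h' x)^2 := by
          intro x hx
          have hinvle : (h x)⁻¹ ≤ (Ginv hs (-(cconst g μ * V)))⁻¹ :=
            inv_anti₀ hGiPos (h_lower x hx)
          calc (h' x)^2 * (h x)⁻¹ ≤ (h' x)^2 * (Ginv hs (-(cconst g μ * V)))⁻¹ :=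
                mul_le_mul_of_nonneg_left hinvle (sq_nonneg _)
            _ = (Ginv hs (-(cconst g μ * V)))⁻¹ * (h' x)^2 := mul_comm _ _
        have := intervalIntegral.integral_mono_on hL0 iiB
          (hsq.const_mul (Ginv hs (-(cconst g μ * V)))⁻¹) hptw
        rwa [intervalIntegral.integral_const_mul] at this
      -- final assembly (main case)
      rw [hnormsq]
      have e1 : μ^2*(∫ x in (0:ℝ)..L, (h' x)^2 * (h x)⁻¹)
          ≤ μ^2*((Ginv hs (-(cconst g μ * V)))⁻¹ * ∫ x in (0:ℝ)..L, (h' x)^2) :=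
        mul_le_mul_of_nonneg_left hBle (sq_nonneg μ)
      have e2 : μ^2*((Ginv hs (-(cconst g μ * V)))⁻¹ * ∫ x in (0:ℝ)..L, (h' x)^2)
          = (μ^2/(Ginv hs (-(cconst g μ * V))))*(∫ x in (0:ℝ)..L, (h' x)^2) := by
        rw [div_eq_mul_inv]; ring
      have e3 : (μ^2/(Ginv hs (-(cconst g μ * V))))*(∫ x in (0:ℝ)..L, (h' x)^2)
          ≤ M*(∫ x in (0:ℝ)..L, (h' x)^2) := mul_le_mul_of_nonneg_right hm2 hB'0
      have e6 : (3*Hmax/2)*(∫ x in (0:ℝ)..L, (v x)^2) ≤ M*(∫ x in (0:ℝ)..L, (v x)^2) :=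
        mul_le_mul_of_nonneg_right hm1 hT0
      have e7 : g*(∫ x in (0:ℝ)..L, (h x - hs)^2) ≤ M*(∫ x in (0:ℝ)..L, (h x - hs)^2) :=
        mul_le_mul_of_nonneg_right hm5 hA0
      have efin : V ≤ M*ξ^2 + M*w^2 + M*(∫ x in (0:ℝ)..L, (h x - hs)^2)
          + M*(∫ x in (0:ℝ)..L, (h' x)^2) + M*(∫ x in (0:ℝ)..L, (v x)^2) := by
        rw [hVexp]
        linarith only [hIwup, hIwup2, hIhvHmax, e1, e2, e3, e6, e7, hquad]
      have hexp : M*(ξ^2 + w^2 + (∫ x in (0:ℝ)..L, (h x - hs)^2)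
          + (∫ x in (0:ℝ)..L, (h' x)^2) + (∫ x in (0:ℝ)..L, (v x)^2))
          = M*ξ^2 + M*w^2 + M*(∫ x in (0:ℝ)..L, (h x - hs)^2)
          + M*(∫ x in (0:ℝ)..L, (h' x)^2) + M*(∫ x in (0:ℝ)..L, (v x)^2) := by ring
      linarith only [efin, hexp]
    · -- JUNK CASE
      have hIwzero : (∫ x in (0:ℝ)..L, (h x)⁻¹ * (h x * v x + μ * h' x)^2) = 0 :=
        intervalIntegral.integral_undef hIw
      rw [hnormsq]
      have hVexp2 : V = g*(∫ x in (0:ℝ)..L, (h x - hs)^2)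
          + (1/2)*(∫ x in (0:ℝ)..L, h x * (v x)^2)
          + ((q*k^2/2)*ξ^2 + (q/2)*(w + k*ξ)^2) := by
        rw [hVexp, hIwzero]; ring
      have e7 : g*(∫ x in (0:ℝ)..L, (h x - hs)^2) ≤ M*(∫ x in (0:ℝ)..L, (h x - hs)^2) :=
        mul_le_mul_of_nonneg_right hm5 hA0
      by_cases hP : h xM ≤ 2*M
      · -- small max
        have hIhv2M : (∫ x in (0:ℝ)..L, h x * (v x)^2)
            ≤ 2*M * ∫ x in (0:ℝ)..L, (v x)^2 := by
          have := intervalIntegral.integral_mono_on hL0 iiIhv (iiT.const_mul (2*M))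
            (fun x hx => mul_le_mul_of_nonneg_right ((hxMmax hx).trans hP) (sq_nonneg _))
          rwa [intervalIntegral.integral_const_mul] at this
        have hMB0 : 0 ≤ M*(∫ x in (0:ℝ)..L, (h' x)^2) := mul_nonneg hM0.le hB'0
        have hexp : M*(ξ^2 + w^2 + (∫ x in (0:ℝ)..L, (h x - hs)^2)
            + (∫ x in (0:ℝ)..L, (h' x)^2) + (∫ x in (0:ℝ)..L, (v x)^2))
            = M*ξ^2 + M*w^2 + M*(∫ x in (0:ℝ)..L, (h x - hs)^2)
            + M*(∫ x in (0:ℝ)..L, (h' x)^2) + M*(∫ x in (0:ℝ)..L, (v x)^2) := by ring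
        linarith only [hVexp2, e7, hquad, hIhv2M, hMB0, hexp]
      · push_neg at hP
        -- big max : use chain bound with (u-hs)^2/2
        have hφ₁cont : ContinuousOn (fun u => u - hs) (Set.Icc (h xm) (h xM)) :=
          continuousOn_id.sub continuousOn_const
        have hΦ₁ : ∀ p ∈ Set.Icc (h xm) (h xM), ∀ q' ∈ Set.Icc (h xm) (h xM),
            (q' - hs)^2/2 - (p - hs)^2/2 = ∫ u in p..q', (u - hs) :=
          fun p _ q' _ => ftc_phi1 hs p q'
        have hω₁II : ∀ c d, c ∈ Set.Icc 0 L → d ∈ Set.Icc 0 L →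
            IntervalIntegrable (fun s => |h s - hs| * |h' s|) volume c d := by
          intro c d hc hd
          apply (hsubII _ habs c d hc hd).continuousOn_mul
          apply ContinuousOn.abs
          exact ContinuousOn.mono (hcont.sub continuousOn_const) (Set.uIcc_subset_Icc hc hd)
        have hω₁0 : ∀ x ∈ Set.Icc 0 L, 0 ≤ |h x - hs| * |h' x| :=
          fun x _ => mul_nonneg (abs_nonneg _) (abs_nonneg _)
        have chain1 : (h xM - hs)^2/2 ≤ ∫ s in (0:ℝ)..L, |h s - hs| * |h' s| := by
          rcases le_total x₀ xM with hod | hod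
          · have hcb : |(fun u => (u - hs)^2/2) (h xM) - (fun u => (u - hs)^2/2) (h x₀)|
                ≤ ∫ s in x₀..xM, |(fun u => u - hs) (h s)| * |h' s| :=
              chain_bound L h h' (h xm) (h xM) hm0M hrange hcont hkeyb habs
                (fun u => (u - hs)^2/2) (fun u => u - hs) hφ₁cont hΦ₁ x₀ xM hx₀I hxMI hod
            simp only [hx₀] at hcb
            rw [sub_self] at hcb
            have hz : ((0:ℝ))^2/2 = 0 := by norm_num
            rw [hz, sub_zero, abs_of_nonneg (by positivity)] at hcb
            exact hcb.trans (hext _ hω₁II hω₁0 x₀ xM hx₀I hxMI hod)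
          · have hcb : |(fun u => (u - hs)^2/2) (h x₀) - (fun u => (u - hs)^2/2) (h xM)|
                ≤ ∫ s in xM..x₀, |(fun u => u - hs) (h s)| * |h' s| :=
              chain_bound L h h' (h xm) (h xM) hm0M hrange hcont hkeyb habs
                (fun u => (u - hs)^2/2) (fun u => u - hs) hφ₁cont hΦ₁ xM x₀ hxMI hx₀I hod
            simp only [hx₀] at hcb
            rw [sub_self] at hcb
            have hz : ((0:ℝ))^2/2 = 0 := by norm_num
            rw [hz, zero_sub, abs_neg, abs_of_nonneg (by positivity)] at hcb
            exact hcb.trans (hext _ hω₁II hω₁0 xM x₀ hxMI hx₀I hod)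
        have hcs1 : (∫ s in (0:ℝ)..L, |h s - hs| * |h' s|)
            ≤ Real.sqrt (∫ x in (0:ℝ)..L, (h x - hs)^2)
              * Real.sqrt (∫ x in (0:ℝ)..L, (h' x)^2) := by
          apply cs_general 0 L hL0 _ _ _ iiA hsq (hω₁II 0 L ⟨le_rfl, hL0⟩ ⟨hL0, le_rfl⟩)
            (fun x _ => sq_nonneg _) (fun x _ => sq_nonneg _)
          intro t x hx
          exact aux_cs1 t (h x - hs) (h' x)
        -- numeric chase
        set A := ∫ x in (0:ℝ)..L, (h x - hs)^2 with hAdef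
        set B' := ∫ x in (0:ℝ)..L, (h' x)^2 with hB'def
        set T := ∫ x in (0:ℝ)..L, (v x)^2 with hTdef
        set Gi := Ginv hs (-(cconst g μ * V)) with hGidef
        have hhsM : hs ≤ (2:ℝ)/3*M := by linarith [hm1, hhs]
        have hd43 : (4:ℝ)/3*M ≤ h xM - hs := by linarith
        have key4 : (8:ℝ)/9*M^2 ≤ Real.sqrt A * Real.sqrt B' := by
          have h1 : ((4:ℝ)/3*M)^2 ≤ (h xM - hs)^2 :=
            pow_le_pow_left₀ (by positivity) hd43 2
          have e : ((4:ℝ)/3*M)^2 = (16:ℝ)/9*M^2 := by ring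
          linarith only [chain1, hcs1, h1, e]
        have sqstep : (64:ℝ)/81*M^4 ≤ A*B' := by
          have h10 : ((8:ℝ)/9*M^2)^2 ≤ (Real.sqrt A * Real.sqrt B')^2 :=
            pow_le_pow_left₀ (by positivity) key4 2
          have h11 : (Real.sqrt A * Real.sqrt B')^2 = A*B' := by
            rw [mul_pow, Real.sq_sqrt hA0, Real.sq_sqrt hB'0]
          have e : ((8:ℝ)/9*M^2)^2 = (64:ℝ)/81*M^4 := by ring
          linarith only [h10, h11, e]
        have hgAV : g*A ≤ V := by
          rw [hVexp2]
          linarith only [hIhv0, hquadnn1, hquadnn2]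
        have hRpos : 0 < Rconst g μ hs Hmax := lt_of_le_of_lt hV0 hVR
        have hgAB : g*(A*B') ≤ Rconst g μ hs Hmax * B' := by
          have h1 : g*A*B' ≤ V*B' := mul_le_mul_of_nonneg_right hgAV hB'0
          have h2 : V*B' ≤ Rconst g μ hs Hmax * B' := mul_le_mul_of_nonneg_right hVR.le hB'0
          have e : g*(A*B') = g*A*B' := by ring
          linarith only [h1, h2, e]
        have hμhsM : μ^2/hs ≤ M := by
          have f1 : μ^2/hs ≤ μ^2/Gi := by gcongr
          linarith only [f1, hm2]
        have hM5 : (81/16)*(μ^2*hs^3) ≤ M^5 := by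
          have f2 : (3:ℝ)/2*hs ≤ M := by linarith [hm1, hhs]
          have p4 : ((3:ℝ)/2*hs)^4 ≤ M^4 := pow_le_pow_left₀ (by positivity) f2 4
          have p5 : (μ^2/hs)*(((3:ℝ)/2*hs)^4) ≤ M*M^4 :=
            mul_le_mul hμhsM p4 (by positivity) hM0.le
          have p6 : (μ^2/hs)*(((3:ℝ)/2*hs)^4) = (81/16)*(μ^2*hs^3) := by
            field_simp
            ring
          have p7 : M*M^4 = M^5 := by ring
          linarith only [p5, p6, p7]
        have hRle : Rconst g μ hs Hmax ≤ (4:ℝ)/3*(μ*Real.sqrt g*(hs*Real.sqrt hs)) := by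
          unfold Rconst
          have hx := mul_nonpos_of_nonneg_of_nonpos
            (by positivity : (0:ℝ) ≤ 2*μ*Real.sqrt g/3) hminle
          linarith only [hx]
        have hR2 : (Rconst g μ hs Hmax)^2 ≤ (16:ℝ)/9*(μ^2*g*hs^3) := by
          have h1 : (Rconst g μ hs Hmax)^2 ≤ ((4:ℝ)/3*(μ*Real.sqrt g*(hs*Real.sqrt hs)))^2 :=
            pow_le_pow_left₀ hRpos.le hRle 2
          have h2 : ((4:ℝ)/3*(μ*Real.sqrt g*(hs*Real.sqrt hs)))^2
              = (16:ℝ)/9*(μ^2*((Real.sqrt g)^2)*(hs^2*(Real.sqrt hs)^2)) := by ring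
          rw [Real.sq_sqrt hg.le, Real.sq_sqrt hhs0.le] at h2
          linarith only [h1, h2]
        have hfin : Rconst g μ hs Hmax ≤ B' * M := by
          have c1 : g*((64:ℝ)/81*M^4) ≤ Rconst g μ hs Hmax * B' := by
            have s1 := mul_le_mul_of_nonneg_left sqstep hg.le
            linarith only [s1, hgAB]
          have c2 : (64:ℝ)/81*(g*M^5) ≤ (Rconst g μ hs Hmax * B') * M := by
            have s2 := mul_le_mul_of_nonneg_right c1 hM0.le
            linarith only [s2]
          have c3 : (16:ℝ)/9*(μ^2*g*hs^3) ≤ (64:ℝ)/81*(g*M^5) := by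
            have s3 := mul_le_mul_of_nonneg_left hM5 hg.le
            have s4 : (0:ℝ) ≤ μ^2*g*hs^3 := by positivity
            linarith only [s3, s4]
          have c4 : (Rconst g μ hs Hmax)*(Rconst g μ hs Hmax)
              ≤ (Rconst g μ hs Hmax)*(B'*M) := by
            linarith only [hR2, c2, c3]
          exact le_of_mul_le_mul_left c4 hRpos
        have hIhvle : (1/2)*(∫ x in (0:ℝ)..L, h x * (v x)^2) ≤ M*B' := by
          have h1 : (1/2)*(∫ x in (0:ℝ)..L, h x * (v x)^2) ≤ V := by
            rw [hVexp2]
            linarith only [hgA0, hquadnn1, hquadnn2]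
          have h2 : V < Rconst g μ hs Hmax := hVR
          have e : B'*M = M*B' := by ring
          linarith only [h1, h2, hfin, e]
        have hMT0 : 0 ≤ M*T := mul_nonneg hM0.le hT0
        have hexp : M*(ξ^2 + w^2 + A + B' + T)
            = M*ξ^2 + M*w^2 + M*A + M*B' + M*T := by ring
        linarith only [hVexp2, e7, hquad, hIhvle, hMT0, hexp]
end

section
/- Let f ∈ C⁰([0,∞)), and let h ∈ C¹([0,∞)×[0,L];(0,∞)) ∩ C²((0,∞)×(0,L)) and v ∈ C⁰([0,∞)×[0,L]) ∩ C¹((0,∞)×[0,L]) with v(t,·) ∈ C²((0,L)) for each t > 0 satisfy h_t + (hv)_x = 0 for t > 0, x ∈ [0,L], and (hv)_t + (hv² + (1/2)g h²)_x = μ(h v_x)_x + h f for t > 0, x ∈ (0,L). Define φ(t,x) := h(t,x)v(t,x) + μ h_x(t,x). Then for all t > 0 and x ∈ (0,L): φ_t(t,x) = h(t,x) f(t) − ( φ(t,x) v(t,x) + (1/2) g h(t,x)² )_x. -/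
set_option linter.unusedVariables false

open Set MeasureTheory

/-- A pair (h,v) of classical solutions of the viscous Saint-Venant PDEs on
[0,∞)×[0,L] with input `f`, with `h ∈ C¹([0,∞)×[0,L];(0,∞)) ∩ C²((0,∞)×(0,L))`,
`v ∈ C⁰([0,∞)×[0,L]) ∩ C¹((0,∞)×[0,L])` and `v(t,⬝) ∈ C²((0,L))` for `t > 0`.
The fields `ht, hx, hxx, hxt, vt, vx, vxx` are the partial derivatives. -/
structure LiquidPDE (L g μ : ℝ) where
  f : ℝ → ℝ
  h : ℝ → ℝ → ℝ
  v : ℝ → ℝ → ℝ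
  ht : ℝ → ℝ → ℝ
  hx : ℝ → ℝ → ℝ
  vt : ℝ → ℝ → ℝ
  vx : ℝ → ℝ → ℝ
  hxx : ℝ → ℝ → ℝ
  hxt : ℝ → ℝ → ℝ
  vxx : ℝ → ℝ → ℝ
  f_cont : ContinuousOn f (Set.Ici (0:ℝ))
  h_pos : ∀ t ∈ Set.Ici (0:ℝ), ∀ x ∈ Set.Icc 0 L, 0 < h t x
  h_cont : ContinuousOn (fun p : ℝ × ℝ => h p.1 p.2) (Set.Ici (0:ℝ) ×ˢ Set.Icc (0:ℝ) L)
  ht_deriv : ∀ t ∈ Set.Ici (0:ℝ), ∀ x ∈ Set.Icc 0 L,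
    HasDerivWithinAt (fun τ => h τ x) (ht t x) (Set.Ici 0) t
  hx_deriv : ∀ t ∈ Set.Ici (0:ℝ), ∀ x ∈ Set.Icc 0 L,
    HasDerivWithinAt (fun y => h t y) (hx t x) (Set.Icc 0 L) x
  ht_cont : ContinuousOn (fun p : ℝ × ℝ => ht p.1 p.2) (Set.Ici (0:ℝ) ×ˢ Set.Icc (0:ℝ) L)
  hx_cont : ContinuousOn (fun p : ℝ × ℝ => hx p.1 p.2) (Set.Ici (0:ℝ) ×ˢ Set.Icc (0:ℝ) L)
  hxx_deriv : ∀ t > (0:ℝ), ∀ x ∈ Set.Ioo 0 L, HasDerivAt (fun y => hx t y) (hxx t x) x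
  hxt_deriv : ∀ t > (0:ℝ), ∀ x ∈ Set.Ioo 0 L, HasDerivAt (fun τ => hx τ x) (hxt t x) t
  hxx_cont : ContinuousOn (fun p : ℝ × ℝ => hxx p.1 p.2) (Set.Ioi (0:ℝ) ×ˢ Set.Ioo (0:ℝ) L)
  v_cont : ContinuousOn (fun p : ℝ × ℝ => v p.1 p.2) (Set.Ici (0:ℝ) ×ˢ Set.Icc (0:ℝ) L)
  vt_deriv : ∀ t > (0:ℝ), ∀ x ∈ Set.Icc 0 L, HasDerivAt (fun τ => v τ x) (vt t x) t
  vx_deriv : ∀ t > (0:ℝ), ∀ x ∈ Set.Icc 0 L,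
    HasDerivWithinAt (fun y => v t y) (vx t x) (Set.Icc 0 L) x
  vt_cont : ContinuousOn (fun p : ℝ × ℝ => vt p.1 p.2) (Set.Ioi (0:ℝ) ×ˢ Set.Icc (0:ℝ) L)
  vx_cont : ContinuousOn (fun p : ℝ × ℝ => vx p.1 p.2) (Set.Ioi (0:ℝ) ×ˢ Set.Icc (0:ℝ) L)
  vxx_deriv : ∀ t > (0:ℝ), ∀ x ∈ Set.Ioo 0 L, HasDerivAt (fun y => vx t y) (vxx t x) x
  vxx_cont : ∀ t > (0:ℝ), ContinuousOn (fun y => vxx t y) (Set.Ioo 0 L)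
  /-- the continuity equation `h_t + (hv)_x = 0` for `t > 0`, `x ∈ [0,L]` -/
  mass_eq : ∀ t > (0:ℝ), ∀ x ∈ Set.Icc 0 L,
    ht t x + (hx t x * v t x + h t x * vx t x) = 0
  /-- the momentum equation `(hv)_t + (hv² + gh²/2)_x = μ(hv_x)_x + hf`
  for `t > 0`, `x ∈ (0,L)` -/
  mom_eq : ∀ t > (0:ℝ), ∀ x ∈ Set.Ioo 0 L,
    (ht t x * v t x + h t x * vt t x)
      + (hx t x * v t x ^ 2 + 2 * h t x * v t x * vx t x + g * h t x * hx t x)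
      = μ * (hx t x * vx t x + h t x * vxx t x) + h t x * f t

/-- The x-derivative of `h_t`, expressed via the momentum equation
(so that it is jointly continuous): `A = -(h_xx v + 2 h_x v_x + h v_xx)` where
`h v_xx` is replaced using the momentum equation. -/
noncomputable def AA (L g μ : ℝ) (sol : LiquidPDE L g μ) (s y : ℝ) : ℝ :=
  -(sol.hxx s y * sol.v s y + 2 * (sol.hx s y * sol.vx s y) +
    (sol.ht s y * sol.v s y + sol.h s y * sol.vt s y + sol.hx s y * sol.v s y ^ 2 +
      2 * (sol.h s y * sol.v s y * sol.vx s y) + g * (sol.h s y * sol.hx s y) -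
      μ * (sol.hx s y * sol.vx s y) - sol.h s y * sol.f s) / μ)

theorem stmt15 (L g μ : ℝ) (hL : 0 < L) (hg : 0 < g) (hμ : 0 < μ)
    (sol : LiquidPDE L g μ) :
    -- with φ := h v + μ h_x, for all t > 0 and x ∈ (0,L):
    -- φ_t = h f − ( φ v + (1/2) g h² )_x
    ∀ t > (0:ℝ), ∀ x ∈ Set.Ioo 0 L,
      (HasDerivAt (fun τ => sol.h τ x * sol.v τ x + μ * sol.hx τ x)
        (sol.ht t x * sol.v t x + sol.h t x * sol.vt t x + μ * sol.hxt t x) t) ∧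
      sol.ht t x * sol.v t x + sol.h t x * sol.vt t x + μ * sol.hxt t x
        = sol.h t x * sol.f t
          - ((sol.hx t x * sol.v t x + sol.h t x * sol.vx t x + μ * sol.hxx t x) * sol.v t x
             + (sol.h t x * sol.v t x + μ * sol.hx t x) * sol.vx t x
             + g * sol.h t x * sol.hx t x) := by
  intro t ht0 x hxmem
  obtain ⟨hx1, hx2⟩ := hxmem
  have hxIcc : x ∈ Icc 0 L := ⟨hx1.le, hx2.le⟩
  set U : Set (ℝ × ℝ) := Ioi (0:ℝ) ×ˢ Ioo (0:ℝ) L with hU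
  have hUsub : U ⊆ Ici (0:ℝ) ×ˢ Icc (0:ℝ) L :=
    prod_mono Ioi_subset_Ici_self Ioo_subset_Icc_self
  have hUsub2 : U ⊆ Ioi (0:ℝ) ×ˢ Icc (0:ℝ) L :=
    prod_mono (subset_refl _) Ioo_subset_Icc_self
  -- continuity of all the ingredients on U
  have hc_h : ContinuousOn (fun p : ℝ × ℝ => sol.h p.1 p.2) U := sol.h_cont.mono hUsub
  have hc_v : ContinuousOn (fun p : ℝ × ℝ => sol.v p.1 p.2) U := sol.v_cont.mono hUsub
  have hc_ht : ContinuousOn (fun p : ℝ × ℝ => sol.ht p.1 p.2) U := sol.ht_cont.mono hUsub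
  have hc_hx : ContinuousOn (fun p : ℝ × ℝ => sol.hx p.1 p.2) U := sol.hx_cont.mono hUsub
  have hc_vt : ContinuousOn (fun p : ℝ × ℝ => sol.vt p.1 p.2) U := sol.vt_cont.mono hUsub2
  have hc_vx : ContinuousOn (fun p : ℝ × ℝ => sol.vx p.1 p.2) U := sol.vx_cont.mono hUsub2
  have hc_hxx : ContinuousOn (fun p : ℝ × ℝ => sol.hxx p.1 p.2) U := sol.hxx_cont
  have hc_f : ContinuousOn (fun p : ℝ × ℝ => sol.f p.1) U :=
    sol.f_cont.comp continuous_fst.continuousOn (fun p hp => mem_Ici.mpr (le_of_lt (mem_Ioi.mp (mem_prod.mp hp).1)))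
  have Acont : ContinuousOn (fun p : ℝ × ℝ => AA L g μ sol p.1 p.2) U := by
    unfold AA
    have c1 : ContinuousOn (fun p : ℝ × ℝ => sol.hxx p.1 p.2 * sol.v p.1 p.2) U :=
      hc_hxx.mul hc_v
    have c2 : ContinuousOn (fun p : ℝ × ℝ => 2 * (sol.hx p.1 p.2 * sol.vx p.1 p.2)) U :=
      continuousOn_const.mul (hc_hx.mul hc_vx)
    have cN : ContinuousOn (fun p : ℝ × ℝ =>
        sol.ht p.1 p.2 * sol.v p.1 p.2 + sol.h p.1 p.2 * sol.vt p.1 p.2 +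
          sol.hx p.1 p.2 * sol.v p.1 p.2 ^ 2 +
          2 * (sol.h p.1 p.2 * sol.v p.1 p.2 * sol.vx p.1 p.2) +
          g * (sol.h p.1 p.2 * sol.hx p.1 p.2) - μ * (sol.hx p.1 p.2 * sol.vx p.1 p.2) -
          sol.h p.1 p.2 * sol.f p.1) U := by
      exact ((((((hc_ht.mul hc_v).add (hc_h.mul hc_vt)).add (hc_hx.mul (hc_v.pow 2))).add
        (continuousOn_const.mul ((hc_h.mul hc_v).mul hc_vx))).add
        (continuousOn_const.mul (hc_h.mul hc_hx))).sub
          (continuousOn_const.mul (hc_hx.mul hc_vx))).sub (hc_h.mul hc_f)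
    exact ((c1.add c2).add (cN.div_const μ)).neg
  -- time derivative of h at positive times
  have hIci : ∀ s > (0:ℝ), ∀ y ∈ Icc 0 L,
      HasDerivAt (fun τ => sol.h τ y) (sol.ht s y) s := fun s hs y hy =>
    (sol.ht_deriv s hs.le y hy).hasDerivAt (Ici_mem_nhds hs)
  -- x-derivative of h at interior points
  have hxD : ∀ s ∈ Ici (0:ℝ), ∀ y ∈ Ioo 0 L,
      HasDerivAt (fun y => sol.h s y) (sol.hx s y) y := fun s hs y hy =>
    (sol.hx_deriv s hs y (Ioo_subset_Icc_self hy)).hasDerivAt (Icc_mem_nhds hy.1 hy.2)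
  have vxD : ∀ s > (0:ℝ), ∀ y ∈ Ioo 0 L,
      HasDerivAt (fun y => sol.v s y) (sol.vx s y) y := fun s hs y hy =>
    (sol.vx_deriv s hs y (Ioo_subset_Icc_self hy)).hasDerivAt (Icc_mem_nhds hy.1 hy.2)
  -- AA equals -(hxx v + 2 hx vx + h vxx) via the momentum equation
  have Aeq : ∀ s > (0:ℝ), ∀ y ∈ Ioo 0 L, AA L g μ sol s y
      = -((sol.hxx s y * sol.v s y + sol.hx s y * sol.vx s y) +
          (sol.hx s y * sol.vx s y + sol.h s y * sol.vxx s y)) := by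
    intro s hs y hy
    have hm := sol.mom_eq s hs y hy
    unfold AA
    field_simp
    nlinarith [hm]
  -- A is the x-derivative of ht on the open rectangle
  have htx : ∀ s > (0:ℝ), ∀ y ∈ Ioo 0 L,
      HasDerivAt (fun y => sol.ht s y) (AA L g μ sol s y) y := by
    intro s hs y hy
    have hD : HasDerivAt
        (fun y => -(sol.hx s y * sol.v s y + sol.h s y * sol.vx s y))
        (-((sol.hxx s y * sol.v s y + sol.hx s y * sol.vx s y) +
          (sol.hx s y * sol.vx s y + sol.h s y * sol.vxx s y))) y :=
      (((sol.hxx_deriv s hs y hy).mul (vxD s hs y hy)).add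
        ((hxD s hs.le y hy).mul (sol.vxx_deriv s hs y hy))).neg
    have heq : (fun y => sol.ht s y)
        =ᶠ[nhds y] (fun y => -(sol.hx s y * sol.v s y + sol.h s y * sol.vx s y)) := by
      filter_upwards [Icc_mem_nhds hy.1 hy.2] with z hz
      have := sol.mass_eq s hs z hz
      linarith
    rw [Aeq s hs y hy]
    exact hD.congr_of_eventuallyEq heq
  -- the radius and the compact box with the bound on A
  set r : ℝ := min x (L - x) / 2 with hrdef
  have hmin : 0 < min x (L - x) := lt_min hx1 (sub_pos.mpr hx2)
  have hr0 : 0 < r := by positivity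
  have hminx : min x (L - x) ≤ x := min_le_left _ _
  have hminL : min x (L - x) ≤ L - x := min_le_right _ _
  have hIccsub : Icc (x - r) (x + r) ⊆ Ioo 0 L := by
    intro y hy
    simp only [mem_Icc] at hy
    constructor <;> [linarith; linarith]
  have hballIcc : Metric.ball x r ⊆ Icc (x - r) (x + r) := by
    rw [Real.ball_eq_Ioo]; exact Ioo_subset_Icc_self
  have hballIoo : Metric.ball x r ⊆ Ioo 0 L := hballIcc.trans hIccsub
  have ht2 : (0:ℝ) < t / 2 := by linarith
  have hKU : Icc (t/2) (t+1) ×ˢ Icc (x - r) (x + r) ⊆ U := by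
    intro p hp
    exact ⟨lt_of_lt_of_le ht2 hp.1.1, hIccsub hp.2⟩
  obtain ⟨M, hM⟩ := (isCompact_Icc.prod isCompact_Icc).exists_bound_of_continuousOn
    (Acont.mono hKU)
  -- continuity in time of ht and of A at fixed space point
  have hht_y : ∀ y ∈ Icc (0:ℝ) L, ContinuousOn (fun s => sol.ht s y) (Ici 0) := by
    intro y hy
    exact sol.ht_cont.comp (continuous_id.prodMk continuous_const).continuousOn
      (fun s hs => ⟨hs, hy⟩)
  have hA_x_cont : ContinuousOn (fun s => AA L g μ sol s x) (Ioi 0) :=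
    Acont.comp (continuous_id.prodMk continuous_const).continuousOn
      (fun s hs => ⟨hs, hx1, hx2⟩)
  -- the key integral identity for hx
  have key : ∀ τ ∈ Ioo (t/2) (t+1),
      sol.hx τ x - sol.hx (t/2) x = ∫ s in (t/2)..τ, AA L g μ sol s x := by
    intro τ hτ
    obtain ⟨hτ1, hτ2⟩ := hτ
    have huIcc : uIcc (t/2) τ = Icc (t/2) τ := uIcc_of_le hτ1.le
    have huIoc : uIoc (t/2) τ = Ioc (t/2) τ := uIoc_of_le hτ1.le
    have hIciIcc : Icc (t/2) τ ⊆ Ici (0:ℝ) := fun s hs => le_trans ht2.le hs.1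
    have FTC1 : ∀ y ∈ Ioo (0:ℝ) L,
        (∫ s in (t/2)..τ, sol.ht s y) = sol.h τ y - sol.h (t/2) y := by
      intro y hy
      apply intervalIntegral.integral_eq_sub_of_hasDerivAt
      · intro s hs
        rw [huIcc] at hs
        exact hIci s (lt_of_lt_of_le ht2 hs.1) y (Ioo_subset_Icc_self hy)
      · apply ContinuousOn.intervalIntegrable
        exact (hht_y y (Ioo_subset_Icc_self hy)).mono (huIcc ▸ hIciIcc)
    have hm1 : ∀ᶠ y in nhds x,
        AEStronglyMeasurable (fun s => sol.ht s y) (volume.restrict (uIoc (t/2) τ)) := by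
      filter_upwards [Metric.ball_mem_nhds x hr0] with y hy
      refine ((hht_y y (Ioo_subset_Icc_self (hballIoo hy))).mono ?_).aestronglyMeasurable
        measurableSet_uIoc
      rw [huIoc]; exact (Ioc_subset_Icc_self).trans hIciIcc
    have hm2 : IntervalIntegrable (fun s => sol.ht s x) volume (t/2) τ := by
      apply ContinuousOn.intervalIntegrable
      exact (hht_y x hxIcc).mono (huIcc ▸ hIciIcc)
    have hm3 : AEStronglyMeasurable (fun s => AA L g μ sol s x)
        (volume.restrict (uIoc (t/2) τ)) := by
      refine (hA_x_cont.mono ?_).aestronglyMeasurable measurableSet_uIoc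
      rw [huIoc]; intro s hs; exact lt_of_lt_of_le ht2 hs.1.le
    have hm4 : ∀ᵐ s ∂volume, s ∈ uIoc (t/2) τ →
        ∀ y ∈ Metric.ball x r, ‖AA L g μ sol s y‖ ≤ M := by
      refine Filter.Eventually.of_forall (fun s hs y hy => ?_)
      rw [huIoc] at hs
      exact hM (s, y) ⟨⟨hs.1.le, hs.2.trans hτ2.le⟩, hballIcc hy⟩
    have hm6 : ∀ᵐ s ∂volume, s ∈ uIoc (t/2) τ →
        ∀ y ∈ Metric.ball x r, HasDerivAt (fun y => sol.ht s y) (AA L g μ sol s y) y := by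
      refine Filter.Eventually.of_forall (fun s hs y hy => ?_)
      rw [huIoc] at hs
      exact htx s (lt_trans ht2 hs.1) y (hballIoo hy)
    have step2 := intervalIntegral.hasDerivAt_integral_of_dominated_loc_of_deriv_le
      (𝕜 := ℝ) (μ := volume) (F := fun y s => sol.ht s y)
      (F' := fun y s => AA L g μ sol s y) (x₀ := x) (a := t/2) (b := τ)
      (bound := fun _ => M) (Metric.ball_mem_nhds x hr0) hm1 hm2 hm3 hm4 intervalIntegrable_const hm6
    have heq2 : (fun y => ∫ s in (t/2)..τ, sol.ht s y)
        =ᶠ[nhds x] (fun y => sol.h τ y - sol.h (t/2) y) := by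
      filter_upwards [Ioo_mem_nhds hx1 hx2] with y hy using FTC1 y hy
    have D1 : HasDerivAt (fun y => sol.h τ y - sol.h (t/2) y)
        (∫ s in (t/2)..τ, AA L g μ sol s x) x :=
      step2.2.congr_of_eventuallyEq heq2.symm
    have D2 : HasDerivAt (fun y => sol.h τ y - sol.h (t/2) y)
        (sol.hx τ x - sol.hx (t/2) x) x :=
      (hxD τ (le_trans ht2.le hτ1.le) x ⟨hx1, hx2⟩).sub (hxD (t/2) ht2.le x ⟨hx1, hx2⟩)
    exact D2.unique D1
  -- differentiate the key identity in time : hxt t x = A t x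
  have hInt3 : IntervalIntegrable (fun s => AA L g μ sol s x) volume (t/2) t := by
    apply ContinuousOn.intervalIntegrable
    apply hA_x_cont.mono
    rw [uIcc_of_le (by linarith : t/2 ≤ t)]
    exact fun s hs => lt_of_lt_of_le ht2 hs.1
  have hmeas3 : StronglyMeasurableAtFilter (fun s => AA L g μ sol s x) (nhds t) volume :=
    hA_x_cont.stronglyMeasurableAtFilter isOpen_Ioi t ht0
  have D3 : HasDerivAt (fun τ => ∫ s in (t/2)..τ, AA L g μ sol s x)
      (AA L g μ sol t x) t :=
    intervalIntegral.integral_hasDerivAt_right hInt3 hmeas3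
      (hA_x_cont.continuousAt (Ioi_mem_nhds ht0))
  have heq3 : (fun τ => ∫ s in (t/2)..τ, AA L g μ sol s x)
      =ᶠ[nhds t] (fun τ => sol.hx τ x - sol.hx (t/2) x) := by
    filter_upwards [Ioo_mem_nhds (by linarith : t/2 < t) (by linarith : t < t+1)] with τ hτ
    exact (key τ hτ).symm
  have D4 : HasDerivAt (fun τ => sol.hx τ x - sol.hx (t/2) x) (AA L g μ sol t x) t :=
    D3.congr_of_eventuallyEq heq3.symm
  have D5 : HasDerivAt (fun τ => sol.hx τ x - sol.hx (t/2) x) (sol.hxt t x) t :=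
    (sol.hxt_deriv t ht0 x ⟨hx1, hx2⟩).sub_const _
  have hfinal : sol.hxt t x = AA L g μ sol t x := D5.unique D4
  constructor
  · exact ((hIci t ht0 x hxIcc).mul (sol.vt_deriv t ht0 x hxIcc)).add
      ((sol.hxt_deriv t ht0 x ⟨hx1, hx2⟩).const_mul μ)
  · rw [hfinal]
    unfold AA
    field_simp
    ring
end

section
/- (Lemma 2, energy identity) For every classical solution of the liquid-tank system with input f, the mechanical energy E(h[t],v[t]) := (1/2)∫₀ᴸ h(t,x)v(t,x)² dx + (g/2)∫₀ᴸ (h(t,x)−h*)² dx satisfies, for all t > 0: d/dt E(h[t],v[t]) = −μ ∫₀ᴸ h(t,x) v_x(t,x)² dx + f(t) ∫₀ᴸ h(t,x) v(t,x) dx. -/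
set_option linter.unusedVariables false

open Set MeasureTheory

/-- A classical solution of the liquid-tank system: `(h,v)` classical solutions of the viscous Saint-Venant PDEs on
[0,∞)×[0,L] with input `f`, with `h ∈ C¹([0,∞)×[0,L];(0,∞)) ∩ C²((0,∞)×(0,L))`,
`v ∈ C⁰([0,∞)×[0,L]) ∩ C¹((0,∞)×[0,L])` and `v(t,⬝) ∈ C²((0,L))` for `t > 0`.
The fields `ht, hx, hxx, hxt, vt, vx, vxx` are the partial derivatives. -/
structure ClassicalSolution (L g μ m : ℝ) where
  f : ℝ → ℝ
  xi : ℝ → ℝ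
  w : ℝ → ℝ
  h : ℝ → ℝ → ℝ
  v : ℝ → ℝ → ℝ
  ht : ℝ → ℝ → ℝ
  hx : ℝ → ℝ → ℝ
  vt : ℝ → ℝ → ℝ
  vx : ℝ → ℝ → ℝ
  hxx : ℝ → ℝ → ℝ
  hxt : ℝ → ℝ → ℝ
  vxx : ℝ → ℝ → ℝ
  f_cont : ContinuousOn f (Set.Ici (0:ℝ))
  xi_cont : ContinuousOn xi (Set.Ici (0:ℝ))
  w_cont : ContinuousOn w (Set.Ici (0:ℝ))
  /-- the ODEs `ξ̇ = w`, `ẇ = -f` on `(0,∞)` -/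
  xi_deriv : ∀ t > (0:ℝ), HasDerivAt xi (w t) t
  w_deriv : ∀ t > (0:ℝ), HasDerivAt w (-(f t)) t
  h_pos : ∀ t ∈ Set.Ici (0:ℝ), ∀ x ∈ Set.Icc 0 L, 0 < h t x
  h_cont : ContinuousOn (fun p : ℝ × ℝ => h p.1 p.2) (Set.Ici (0:ℝ) ×ˢ Set.Icc (0:ℝ) L)
  ht_deriv : ∀ t ∈ Set.Ici (0:ℝ), ∀ x ∈ Set.Icc 0 L,
    HasDerivWithinAt (fun τ => h τ x) (ht t x) (Set.Ici 0) t
  hx_deriv : ∀ t ∈ Set.Ici (0:ℝ), ∀ x ∈ Set.Icc 0 L,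
    HasDerivWithinAt (fun y => h t y) (hx t x) (Set.Icc 0 L) x
  ht_cont : ContinuousOn (fun p : ℝ × ℝ => ht p.1 p.2) (Set.Ici (0:ℝ) ×ˢ Set.Icc (0:ℝ) L)
  hx_cont : ContinuousOn (fun p : ℝ × ℝ => hx p.1 p.2) (Set.Ici (0:ℝ) ×ˢ Set.Icc (0:ℝ) L)
  hxx_deriv : ∀ t > (0:ℝ), ∀ x ∈ Set.Ioo 0 L, HasDerivAt (fun y => hx t y) (hxx t x) x
  hxt_deriv : ∀ t > (0:ℝ), ∀ x ∈ Set.Ioo 0 L, HasDerivAt (fun τ => hx τ x) (hxt t x) t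
  hxx_cont : ContinuousOn (fun p : ℝ × ℝ => hxx p.1 p.2) (Set.Ioi (0:ℝ) ×ˢ Set.Ioo (0:ℝ) L)
  v_cont : ContinuousOn (fun p : ℝ × ℝ => v p.1 p.2) (Set.Ici (0:ℝ) ×ˢ Set.Icc (0:ℝ) L)
  vt_deriv : ∀ t > (0:ℝ), ∀ x ∈ Set.Icc 0 L, HasDerivAt (fun τ => v τ x) (vt t x) t
  vx_deriv : ∀ t > (0:ℝ), ∀ x ∈ Set.Icc 0 L,
    HasDerivWithinAt (fun y => v t y) (vx t x) (Set.Icc 0 L) x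
  vt_cont : ContinuousOn (fun p : ℝ × ℝ => vt p.1 p.2) (Set.Ioi (0:ℝ) ×ˢ Set.Icc (0:ℝ) L)
  vx_cont : ContinuousOn (fun p : ℝ × ℝ => vx p.1 p.2) (Set.Ioi (0:ℝ) ×ˢ Set.Icc (0:ℝ) L)
  vxx_deriv : ∀ t > (0:ℝ), ∀ x ∈ Set.Ioo 0 L, HasDerivAt (fun y => vx t y) (vxx t x) x
  vxx_cont : ∀ t > (0:ℝ), ContinuousOn (fun y => vxx t y) (Set.Ioo 0 L)
  /-- the continuity equation `h_t + (hv)_x = 0` for `t > 0`, `x ∈ [0,L]` -/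
  mass_eq : ∀ t > (0:ℝ), ∀ x ∈ Set.Icc 0 L,
    ht t x + (hx t x * v t x + h t x * vx t x) = 0
  /-- the momentum equation `(hv)_t + (hv² + gh²/2)_x = μ(hv_x)_x + hf`
  for `t > 0`, `x ∈ (0,L)` -/
  mom_eq : ∀ t > (0:ℝ), ∀ x ∈ Set.Ioo 0 L,
    (ht t x * v t x + h t x * vt t x)
      + (hx t x * v t x ^ 2 + 2 * h t x * v t x * vx t x + g * h t x * hx t x)
      = μ * (hx t x * vx t x + h t x * vxx t x) + h t x * f t
  /-- the boundary conditions `v(t,0) = v(t,L) = 0` -/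
  bc0 : ∀ t ∈ Set.Ici (0:ℝ), v t 0 = 0
  bcL : ∀ t ∈ Set.Ici (0:ℝ), v t L = 0
  /-- conservation of the total mass -/
  mass_total : ∀ t ∈ Set.Ici (0:ℝ), (∫ x in (0:ℝ)..L, h t x) = m


private lemma slice_cont {Φ : ℝ → ℝ → ℝ} {S T : Set ℝ}
    (hΦ : ContinuousOn (fun p : ℝ × ℝ => Φ p.1 p.2) (S ×ˢ T)) {τ : ℝ} (hτ : τ ∈ S) :
    ContinuousOn (fun x => Φ τ x) T :=
  hΦ.comp ((continuous_const.prodMk continuous_id).continuousOn) (fun x hx => ⟨hτ, hx⟩)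

theorem stmt16 (L g μ m : ℝ) (hL : 0 < L) (hg : 0 < g) (hμ : 0 < μ) (hm : 0 < m)
    (sol : ClassicalSolution L g μ m) :
    ∀ t > (0:ℝ),
      HasDerivAt
        (fun τ => (1/2) * (∫ x in (0:ℝ)..L, sol.h τ x * (sol.v τ x)^2)
          + (g/2) * (∫ x in (0:ℝ)..L, (sol.h τ x - m/L)^2))
        (-μ * (∫ x in (0:ℝ)..L, sol.h t x * (sol.vx t x)^2)
          + sol.f t * (∫ x in (0:ℝ)..L, sol.h t x * sol.v t x)) t := by
  intro t htpos
  have h0L : (0:ℝ) ≤ L := hL.le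
  have hIcc : Set.uIcc (0:ℝ) L = Set.Icc 0 L := uIcc_of_le h0L
  have hIoc : Set.uIoc (0:ℝ) L = Set.Ioc 0 L := uIoc_of_le h0L
  set F : ℝ → ℝ → ℝ := fun τ x =>
    (1/2) * (sol.h τ x * (sol.v τ x)^2) + (g/2) * (sol.h τ x - m/L)^2 with hF
  set F' : ℝ → ℝ → ℝ := fun τ x =>
    (1/2) * (sol.ht τ x * (sol.v τ x)^2) + sol.h τ x * (sol.v τ x * sol.vt τ x)
      + g * ((sol.h τ x - m/L) * sol.ht τ x) with hF'
  -- continuity of spatial slices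
  have hFcont : ∀ τ : ℝ, 0 ≤ τ → ContinuousOn (fun x => F τ x) (Icc 0 L) := by
    intro τ hτ
    have hh := slice_cont sol.h_cont (show τ ∈ Ici (0:ℝ) from hτ)
    have hv := slice_cont sol.v_cont (show τ ∈ Ici (0:ℝ) from hτ)
    exact (continuousOn_const.mul (hh.mul (hv.pow 2))).add
      (continuousOn_const.mul ((hh.sub continuousOn_const).pow 2))
  -- two-variable continuity of F' on a compact box around t
  have hsub1 : Icc (t/2) (3*t/2) ×ˢ Icc (0:ℝ) L ⊆ Ioi 0 ×ˢ Icc 0 L :=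
    fun p hp => ⟨lt_of_lt_of_le (half_pos htpos) hp.1.1, hp.2⟩
  have hsub2 : Icc (t/2) (3*t/2) ×ˢ Icc (0:ℝ) L ⊆ Ici 0 ×ˢ Icc 0 L :=
    fun p hp => ⟨le_of_lt (lt_of_lt_of_le (half_pos htpos) hp.1.1), hp.2⟩
  have hF'cont2 : ContinuousOn (fun p : ℝ × ℝ => F' p.1 p.2)
      (Icc (t/2) (3*t/2) ×ˢ Icc (0:ℝ) L) := by
    exact ((continuousOn_const.mul ((sol.ht_cont.mono hsub2).mul
        ((sol.v_cont.mono hsub2).pow 2))).add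
      ((sol.h_cont.mono hsub2).mul ((sol.v_cont.mono hsub2).mul
        (sol.vt_cont.mono hsub1)))).add
      (continuousOn_const.mul (((sol.h_cont.mono hsub2).sub continuousOn_const).mul
        (sol.ht_cont.mono hsub2)))
  have htK : t ∈ Icc (t/2) (3*t/2) := ⟨by linarith, by linarith⟩
  obtain ⟨C, hC⟩ := (isCompact_Icc.prod isCompact_Icc).exists_bound_of_continuousOn hF'cont2
  have hε0 : (0:ℝ) < t/2 := half_pos htpos
  have hball : ∀ τ ∈ Metric.ball t (t/2), τ ∈ Icc (t/2) (3*t/2) := by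
    intro τ hτ
    have := abs_lt.mp (by simpa [Real.dist_eq] using hτ)
    exact ⟨by linarith [this.1], by linarith [this.2]⟩
  have main := intervalIntegral.hasDerivAt_integral_of_dominated_loc_of_deriv_le
    (μ := MeasureTheory.volume) (F := F) (F' := F') (x₀ := t) (a := 0) (b := L)
    (bound := fun _ => C) (Metric.ball_mem_nhds t hε0) ?_ ?_ ?_ ?_ ?_ ?_
  rotate_left
  · filter_upwards [eventually_gt_nhds htpos] with τ hτ
    exact ((hFcont τ hτ.le).mono (by rw [hIoc]; exact Ioc_subset_Icc_self)).aestronglyMeasurable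
      measurableSet_uIoc
  · exact (hIcc ▸ hFcont t htpos.le).intervalIntegrable
  · exact ((slice_cont hF'cont2 htK).mono
      (by rw [hIoc]; exact Ioc_subset_Icc_self)).aestronglyMeasurable measurableSet_uIoc
  · refine Filter.Eventually.of_forall (fun x hx τ hτ => hC (τ, x) ⟨hball τ hτ, ?_⟩)
    rw [hIoc] at hx; exact Ioc_subset_Icc_self hx
  · exact intervalIntegrable_const
  · refine Filter.Eventually.of_forall (fun x hx τ hτ => ?_)
    have hτ0 : 0 < τ := lt_of_lt_of_le hε0 (hball τ hτ).1
    have hxIcc : x ∈ Icc 0 L := by rw [hIoc] at hx; exact Ioc_subset_Icc_self hx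
    have Hh : HasDerivAt (fun σ => sol.h σ x) (sol.ht τ x) τ :=
      (sol.ht_deriv τ hτ0.le x hxIcc).hasDerivAt (Ici_mem_nhds hτ0)
    have Hv : HasDerivAt (fun σ => sol.v σ x) (sol.vt τ x) τ := sol.vt_deriv τ hτ0 x hxIcc
    have H := ((Hh.mul (Hv.pow 2)).const_mul (1/2 : ℝ)).add
      (((Hh.sub_const (m/L)).pow 2).const_mul (g/2 : ℝ))
    convert H using 1
    · rfl
    simp only [Pi.pow_apply]
    push_cast
    ring
  -- the spatial slices at time t
  have hht := slice_cont sol.h_cont (show t ∈ Ici (0:ℝ) from htpos.le)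
  have hvt := slice_cont sol.v_cont (show t ∈ Ici (0:ℝ) from htpos.le)
  have hvxt := slice_cont sol.vx_cont (show t ∈ Ioi (0:ℝ) from htpos)
  have hF't := slice_cont hF'cont2 htK
  -- integrability at time t
  have hi_hvx2 : IntervalIntegrable (fun x => sol.h t x * (sol.vx t x)^2) volume 0 L :=
    (hIcc ▸ (hht.mul (hvxt.pow 2))).intervalIntegrable
  have hi_hv : IntervalIntegrable (fun x => sol.h t x * sol.v t x) volume 0 L :=
    (hIcc ▸ (hht.mul hvt)).intervalIntegrable
  have hi_F' : IntervalIntegrable (fun x => F' t x) volume 0 L :=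
    (hIcc ▸ hF't).intervalIntegrable
  -- the IBP function
  set G : ℝ → ℝ := fun x => μ * (sol.h t x * sol.vx t x * sol.v t x)
      - (1/2) * (sol.h t x * (sol.v t x)^3)
      - g * (sol.h t x * sol.v t x * (sol.h t x - m/L)) with hG
  set P : ℝ → ℝ := fun x => F' t x + μ * (sol.h t x * (sol.vx t x)^2)
      - sol.f t * (sol.h t x * sol.v t x) with hP
  have Gcont : ContinuousOn G (Icc 0 L) :=
    ((continuousOn_const.mul ((hht.mul hvxt).mul hvt)).sub
      (continuousOn_const.mul (hht.mul (hvt.pow 3)))).sub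
      (continuousOn_const.mul ((hht.mul hvt).mul (hht.sub continuousOn_const)))
  have Pint : IntervalIntegrable P volume 0 L :=
    (hi_F'.add (hi_hvx2.const_mul μ)).sub (hi_hv.const_mul _)
  have Gderiv : ∀ x ∈ Ioo (0:ℝ) L, HasDerivAt G (P x) x := by
    intro x hx
    have hx' : x ∈ Icc 0 L := Ioo_subset_Icc_self hx
    have hnb : Icc (0:ℝ) L ∈ nhds x := Icc_mem_nhds hx.1 hx.2
    have Hh : HasDerivAt (fun y => sol.h t y) (sol.hx t x) x :=
      (sol.hx_deriv t htpos.le x hx').hasDerivAt hnb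
    have Hv : HasDerivAt (fun y => sol.v t y) (sol.vx t x) x :=
      (sol.vx_deriv t htpos x hx').hasDerivAt hnb
    have Hvx : HasDerivAt (fun y => sol.vx t y) (sol.vxx t x) x := sol.vxx_deriv t htpos x hx
    have H := ((((Hh.mul Hvx).mul Hv).const_mul μ).sub
      ((Hh.mul (Hv.pow 3)).const_mul (1/2 : ℝ))).sub
      (((Hh.mul Hv).mul (Hh.sub_const (m/L))).const_mul g)
    convert H using 1
    · rfl
    · rfl
    · rfl
    have mass := sol.mass_eq t htpos x hx'
    have mom := sol.mom_eq t htpos x hx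
    simp only [hP, hF', Pi.pow_apply, Pi.mul_apply]
    push_cast
    linear_combination (g*(sol.h t x - m/L) - (sol.v t x)^2/2) * mass + sol.v t x * mom
  have hint0 : (∫ x in (0:ℝ)..L, P x) = 0 := by
    rw [intervalIntegral.integral_eq_sub_of_hasDeriv_right_of_le h0L Gcont
      (fun x hx => (Gderiv x hx).hasDerivWithinAt) Pint]
    have hv0 : sol.v t 0 = 0 := sol.bc0 t htpos.le
    have hvL : sol.v t L = 0 := sol.bcL t htpos.le
    simp [hG, hv0, hvL]
  have hsplit : (∫ x in (0:ℝ)..L, P x)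
      = (∫ x in (0:ℝ)..L, F' t x)
        + μ * (∫ x in (0:ℝ)..L, sol.h t x * (sol.vx t x)^2)
        - sol.f t * (∫ x in (0:ℝ)..L, sol.h t x * sol.v t x) := by
    simp only [hP]
    rw [intervalIntegral.integral_sub (hi_F'.add (hi_hvx2.const_mul μ)) (hi_hv.const_mul _),
      intervalIntegral.integral_add hi_F' (hi_hvx2.const_mul μ),
      intervalIntegral.integral_const_mul, intervalIntegral.integral_const_mul]
  have hD : (∫ x in (0:ℝ)..L, F' t x)
      = -μ * (∫ x in (0:ℝ)..L, sol.h t x * (sol.vx t x)^2)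
        + sol.f t * (∫ x in (0:ℝ)..L, sol.h t x * sol.v t x) := by linarith
  have heq : (fun τ => (1/2) * (∫ x in (0:ℝ)..L, sol.h τ x * (sol.v τ x)^2)
      + (g/2) * (∫ x in (0:ℝ)..L, (sol.h τ x - m/L)^2))
      =ᶠ[nhds t] (fun τ => ∫ x in (0:ℝ)..L, F τ x) := by
    filter_upwards [eventually_gt_nhds htpos] with τ hτ
    have hh := slice_cont sol.h_cont (show τ ∈ Ici (0:ℝ) from hτ.le)
    have hv := slice_cont sol.v_cont (show τ ∈ Ici (0:ℝ) from hτ.le)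
    have i1 : IntervalIntegrable (fun x => sol.h τ x * (sol.v τ x)^2) volume 0 L :=
      (hIcc ▸ (hh.mul (hv.pow 2))).intervalIntegrable
    have i2 : IntervalIntegrable (fun x => (sol.h τ x - m/L)^2) volume 0 L :=
      (hIcc ▸ ((hh.sub continuousOn_const).pow 2)).intervalIntegrable
    simp only [hF]
    rw [intervalIntegral.integral_add (i1.const_mul (1/2)) (i2.const_mul (g/2)),
      intervalIntegral.integral_const_mul, intervalIntegral.integral_const_mul]
  exact hD ▸ (main.2.congr_of_eventuallyEq heq)
end

section
/- (Lemma 2, W-identity) For every classical solution of the liquid-tank system with input f, the functional W(h[t],v[t]) := (1/2)∫₀ᴸ h(t,x)⁻¹ ( h(t,x)v(t,x) + μ h_x(t,x) )² dx + (g/2)∫₀ᴸ (h(t,x)−h*)² dx satisfies, for all t > 0: d/dt W(h[t],v[t]) = −μ g ∫₀ᴸ h_x(t,x)² dx + f(t) ∫₀ᴸ ( h(t,x)v(t,x) + μ h_x(t,x) ) dx. -/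
set_option linter.unusedVariables false

open Set MeasureTheory

open Filter


lemma abs_small_nhds {δ' : ℝ} (hδ'0 : 0 < δ') : ∀ᶠ y in nhds (0:ℝ), |y| < δ' := by
  filter_upwards [Metric.ball_mem_nhds (0:ℝ) hδ'0] with y hy
  simpa [Real.dist_eq] using hy

/-- Schwarz-type lemma with asymmetric hypotheses. -/
lemma schwarz_aux {H Ht Hx A : ℝ → ℝ → ℝ} {t x δ D : ℝ} (hδ : 0 < δ)
    (hHt : ∀ σ ∈ Icc (t-δ) (t+δ), ∀ y ∈ Icc (x-δ) (x+δ),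
      HasDerivAt (fun σ => H σ y) (Ht σ y) σ)
    (hHx : ∀ σ ∈ Icc (t-δ) (t+δ), HasDerivAt (fun y => H σ y) (Hx σ x) x)
    (hA : ∀ σ ∈ Icc (t-δ) (t+δ), ∀ y ∈ Icc (x-δ) (x+δ),
      HasDerivAt (fun y => Ht σ y) (A σ y) y)
    (hAc : ContinuousAt (fun p : ℝ × ℝ => A p.1 p.2) (t, x))
    (hD : HasDerivAt (fun σ => Hx σ x) D t) :
    D = A t x := by
  have key : ∀ ε > (0:ℝ), |D - A t x| ≤ ε := by
    intro ε hε
    have h1 : {p : ℝ × ℝ | |A p.1 p.2 - A t x| < ε} ∈ nhds (t, x) := by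
      have := hAc (Metric.ball_mem_nhds (A t x) hε)
      refine mem_of_superset this ?_
      intro p hp
      simpa [Real.dist_eq] using hp
    obtain ⟨r, hr0, hrball⟩ := Metric.mem_nhds_iff.1 h1
    set δ' : ℝ := min r δ with hδ'def
    have hδ'0 : 0 < δ' := lt_min hr0 hδ
    have hδ'r : δ' ≤ r := min_le_left _ _
    have hδ'δ : δ' ≤ δ := min_le_right _ _
    have hball : ∀ σ y : ℝ, |σ - t| < δ' → |y - x| < δ' → |A σ y - A t x| < ε := by
      intro σ y h1' h2'
      have hmem : (σ, y) ∈ Metric.ball ((t, x) : ℝ × ℝ) r := by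
        rw [Metric.mem_ball, Prod.dist_eq]
        simp only [Real.dist_eq]
        exact max_lt (lt_of_lt_of_le h1' hδ'r) (lt_of_lt_of_le h2' hδ'r)
      exact hrball hmem
    have slopeclaim : ∀ σ : ℝ, σ ≠ t → |σ - t| < δ' →
        |(Hx σ x - Hx t x)/(σ - t) - A t x| ≤ ε := by
      intro σ hσne hσd
      have habs := abs_lt.1 (lt_of_lt_of_le hσd hδ'δ)
      have hσmem : σ ∈ Icc (t-δ) (t+δ) := ⟨by linarith [habs.1], by linarith [habs.2]⟩
      have htmem : t ∈ Icc (t-δ) (t+δ) := ⟨by linarith, by linarith⟩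
      have hσt : σ - t ≠ 0 := sub_ne_zero.2 hσne
      have dd : ∀ y : ℝ, y ≠ 0 → |y| < δ' →
          |(H σ (x+y) - H σ x - (H t (x+y) - H t x))/((σ - t)*y) - A t x| ≤ ε := by
        intro y hyne hyd
        have hyabs := abs_lt.1 (lt_of_lt_of_le hyd hδ'δ)
        have hymem : x + y ∈ Icc (x-δ) (x+δ) := ⟨by linarith [hyabs.1], by linarith [hyabs.2]⟩
        have hxmem : x ∈ Icc (x-δ) (x+δ) := ⟨by linarith, by linarith⟩
        have hsubset : uIcc t σ ⊆ Icc (t-δ) (t+δ) := uIcc_subset_Icc htmem hσmem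
        have hφ : ∀ s ∈ uIcc t σ, HasDerivAt (fun s => H s (x+y) - H s x)
            (Ht s (x+y) - Ht s x) s := fun s hs =>
          (hHt s (hsubset hs) _ hymem).sub (hHt s (hsubset hs) _ hxmem)
        -- MVT in time
        have mvt1 : ∃ θ : ℝ, |θ - t| < δ' ∧ θ ∈ Icc (t-δ) (t+δ) ∧
            Ht θ (x+y) - Ht θ x
              = (H σ (x+y) - H σ x - (H t (x+y) - H t x))/(σ - t) := by
          rcases hσne.lt_or_gt with hlt | hlt
          · obtain ⟨c, hc, hceq⟩ := exists_hasDerivAt_eq_slope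
              (fun s => H s (x+y) - H s x) (fun s => Ht s (x+y) - Ht s x) hlt
              (fun s hs => (hφ s (by rw [uIcc_of_ge hlt.le]; exact hs)).continuousAt.continuousWithinAt)
              (fun s hs => hφ s (by rw [uIcc_of_ge hlt.le]; exact Ioo_subset_Icc_self hs))
            have hcd : |c - t| < δ' := by
              rw [abs_lt]; constructor
              · calc -δ' < σ - t := (abs_lt.1 hσd).1
                _ < c - t := by linarith [hc.1]
              · linarith [hc.2]
            refine ⟨c, hcd, ⟨by linarith [(abs_lt.1 (lt_of_lt_of_le hcd hδ'δ)).1],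
              by linarith [(abs_lt.1 (lt_of_lt_of_le hcd hδ'δ)).2]⟩, ?_⟩
            rw [hceq]
            have ht' : t - σ ≠ 0 := by intro hh; apply hσt; linarith
            field_simp
            ring
          · obtain ⟨c, hc, hceq⟩ := exists_hasDerivAt_eq_slope
              (fun s => H s (x+y) - H s x) (fun s => Ht s (x+y) - Ht s x) hlt
              (fun s hs => (hφ s (by rw [uIcc_of_le hlt.le]; exact hs)).continuousAt.continuousWithinAt)
              (fun s hs => hφ s (by rw [uIcc_of_le hlt.le]; exact Ioo_subset_Icc_self hs))
            have hcd : |c - t| < δ' := by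
              rw [abs_lt]; constructor
              · linarith [hc.1]
              · calc c - t < σ - t := by linarith [hc.2]
                _ < δ' := (abs_lt.1 hσd).2
            refine ⟨c, hcd, ⟨by linarith [(abs_lt.1 (lt_of_lt_of_le hcd hδ'δ)).1],
              by linarith [(abs_lt.1 (lt_of_lt_of_le hcd hδ'δ)).2]⟩, ?_⟩
            rw [hceq]
        obtain ⟨θ, hθd, hθmem, hθeq⟩ := mvt1
        -- MVT in space
        have mvt2 : ∃ ξ : ℝ, |ξ - x| < δ' ∧ A θ ξ = (Ht θ (x+y) - Ht θ x)/y := by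
          rcases hyne.lt_or_gt with hlt | hlt
          · have hxy : x + y < x := by linarith
            have hsub : Icc (x+y) x ⊆ Icc (x-δ) (x+δ) := Icc_subset_Icc hymem.1 hxmem.2
            obtain ⟨c, hc, hceq⟩ := exists_hasDerivAt_eq_slope (fun z => Ht θ z)
              (fun z => A θ z) hxy
              (fun z hz => (hA θ hθmem z (hsub hz)).continuousAt.continuousWithinAt)
              (fun z hz => hA θ hθmem z (hsub (Ioo_subset_Icc_self hz)))
            refine ⟨c, ?_, ?_⟩
            · rw [abs_lt]; constructor
              · calc -δ' < y := (abs_lt.1 hyd).1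
                _ < c - x := by linarith [hc.1]
              · linarith [hc.2]
            · rw [hceq]
              have hy' : -y ≠ 0 := by simpa using hyne
              field_simp
              rw [show x - (x + y) = -y by ring, mul_comm, mul_div_assoc, div_neg_self hyne]
              ring
          · have hxy : x < x + y := by linarith
            have hsub : Icc x (x+y) ⊆ Icc (x-δ) (x+δ) := Icc_subset_Icc hxmem.1 hymem.2
            obtain ⟨c, hc, hceq⟩ := exists_hasDerivAt_eq_slope (fun z => Ht θ z)
              (fun z => A θ z) hxy
              (fun z hz => (hA θ hθmem z (hsub hz)).continuousAt.continuousWithinAt)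
              (fun z hz => hA θ hθmem z (hsub (Ioo_subset_Icc_self hz)))
            refine ⟨c, ?_, ?_⟩
            · rw [abs_lt]; constructor
              · linarith [hc.1]
              · calc c - x < y := by linarith [hc.2]
                _ < δ' := (abs_lt.1 hyd).2
            · rw [hceq, add_sub_cancel_left]
        obtain ⟨ξ, hξd, hξeq⟩ := mvt2
        have heq : (H σ (x+y) - H σ x - (H t (x+y) - H t x))/((σ - t)*y) = A θ ξ := by
          rw [hξeq, hθeq]
          field_simp
        rw [heq]
        exact (hball θ ξ hθd hξd).le
      -- limit y → 0
      have l1 : ∀ τ ∈ Icc (t-δ) (t+δ), Tendsto (fun y : ℝ => (H τ (x+y) - H τ x)/y)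
          (nhdsWithin 0 {0}ᶜ) (nhds (Hx τ x)) := by
        intro τ hτ
        have hslope := hasDerivAt_iff_tendsto_slope.1 (hHx τ hτ)
        have hcomp : Tendsto (fun y : ℝ => x + y) (nhdsWithin 0 {0}ᶜ)
            (nhdsWithin x {x}ᶜ) := by
          rw [tendsto_nhdsWithin_iff]
          constructor
          · exact ((continuous_const.add continuous_id).tendsto' 0 x (by simp)).mono_left
              nhdsWithin_le_nhds
          · filter_upwards [self_mem_nhdsWithin] with y hy
            simp only [Set.mem_compl_iff, Set.mem_singleton_iff] at hy ⊢
            intro hcontra; exact hy (by linarith)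
        have := hslope.comp hcomp
        refine this.congr fun y => ?_
        simp only [Function.comp]
        rw [slope_def_field, add_sub_cancel_left]
      have hlim : Tendsto (fun y : ℝ =>
          (H σ (x+y) - H σ x - (H t (x+y) - H t x))/((σ - t)*y))
          (nhdsWithin 0 {0}ᶜ) (nhds ((Hx σ x - Hx t x)/(σ - t))) := by
        have := ((l1 σ hσmem).sub (l1 t htmem)).div_const (σ - t)
        refine this.congr fun y => ?_
        rw [← sub_div, div_div, mul_comm]
      have habslim : Tendsto (fun y : ℝ =>
          |(H σ (x+y) - H σ x - (H t (x+y) - H t x))/((σ - t)*y) - A t x|)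
          (nhdsWithin 0 {0}ᶜ) (nhds (|(Hx σ x - Hx t x)/(σ - t) - A t x|)) :=
        (hlim.sub_const (A t x)).abs
      refine le_of_tendsto habslim ?_
      filter_upwards [self_mem_nhdsWithin,
        (abs_small_nhds hδ'0).filter_mono nhdsWithin_le_nhds] with y hy1 hy2
      exact dd y (by simpa using hy1) hy2
    -- limit σ → t
    have hslope := hasDerivAt_iff_tendsto_slope.1 hD
    have habslim : Tendsto (fun σ : ℝ => |(Hx σ x - Hx t x)/(σ - t) - A t x|)
        (nhdsWithin t {t}ᶜ) (nhds (|D - A t x|)) := by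
      have : Tendsto (fun σ : ℝ => (Hx σ x - Hx t x)/(σ - t))
          (nhdsWithin t {t}ᶜ) (nhds D) := by
        refine hslope.congr fun σ => ?_
        rw [slope_def_field]
      exact (this.sub_const (A t x)).abs
    refine le_of_tendsto habslim ?_
    have hsmall : ∀ᶠ σ in nhds t, |σ - t| < δ' := by
      filter_upwards [Metric.ball_mem_nhds t hδ'0] with σ hσ
      simpa [Real.dist_eq] using hσ
    filter_upwards [self_mem_nhdsWithin, hsmall.filter_mono nhdsWithin_le_nhds] with σ h1' h2'
    exact slopeclaim σ (by simpa using h1') h2'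
  have h0 : |D - A t x| ≤ 0 := by
    by_contra hcon
    push_neg at hcon
    have := key (|D - A t x|/2) (by linarith)
    linarith
  rw [sub_eq_zero.1 (abs_nonpos_iff.1 h0)]


/-- Continuity of a parameter interval integral, parameter in a compact interval. -/
lemma continuousOn_param_integral {F : ℝ → ℝ → ℝ} {a b c d : ℝ}
    (hF : ContinuousOn (fun p : ℝ × ℝ => F p.1 p.2) (Icc c d ×ˢ uIcc a b)) :
    ContinuousOn (fun s => ∫ x in a..b, F s x) (Icc c d) := by
  rcases le_or_gt c d with hcd | hcd
  · obtain ⟨C, hC⟩ := (isCompact_Icc.prod isCompact_uIcc).exists_bound_of_continuousOn hF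
    intro s₀ hs₀
    apply intervalIntegral.continuousWithinAt_of_dominated_interval
      (bound := fun _ => C)
    · filter_upwards [self_mem_nhdsWithin] with s hs
      apply ContinuousOn.aestronglyMeasurable _ measurableSet_uIoc
      intro x hx
      have := hF.comp (Continuous.continuousOn (by fun_prop) :
          ContinuousOn (fun x : ℝ => (s, x)) (uIcc a b))
        (fun y hy => mk_mem_prod hs hy)
      exact (this x (uIoc_subset_uIcc hx)).mono uIoc_subset_uIcc
    · filter_upwards [self_mem_nhdsWithin] with s hs
      filter_upwards [] with x
      intro hx
      exact hC (s, x) (mk_mem_prod hs (uIoc_subset_uIcc hx))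
    · exact intervalIntegrable_const
    · filter_upwards [] with x
      intro hx
      have := hF.comp (Continuous.continuousOn (by fun_prop) :
          ContinuousOn (fun s : ℝ => (s, x)) (Icc c d))
        (fun y hy => mk_mem_prod hy (uIoc_subset_uIcc hx))
      exact this s₀ hs₀
  · rw [Icc_eq_empty_of_lt hcd]
    exact continuousOn_empty _

/-- Fubini for continuous functions on a rectangle. -/
lemma interval_integral_swap_cont {F : ℝ → ℝ → ℝ} {a b c d : ℝ} (hab : a ≤ b) (hcd : c ≤ d)
    (hF : ContinuousOn (fun p : ℝ × ℝ => F p.1 p.2) (Icc a b ×ˢ Icc c d)) :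
    ∫ s in a..b, (∫ x in c..d, F s x) = ∫ x in c..d, (∫ s in a..b, F s x) := by
  have h1 : IntegrableOn (Function.uncurry F) (Icc a b ×ˢ Icc c d) volume :=
    hF.integrableOn_compact (isCompact_Icc.prod isCompact_Icc)
  have h2 : Integrable (Function.uncurry F)
      ((volume.restrict (Ioc a b)).prod (volume.restrict (Ioc c d))) := by
    rw [Measure.prod_restrict]
    have : IntegrableOn (Function.uncurry F) (Ioc a b ×ˢ Ioc c d) (volume.prod volume) := by
      rw [← Measure.volume_eq_prod]
      exact h1.mono_set (prod_mono Ioc_subset_Icc_self Ioc_subset_Icc_self)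
    exact this
  rw [intervalIntegral.integral_of_le hab, intervalIntegral.integral_of_le hcd]
  have e1 : ∀ s : ℝ, (∫ x in c..d, F s x) = ∫ x in Ioc c d, F s x :=
    fun s => intervalIntegral.integral_of_le hcd
  have e2 : ∀ x : ℝ, (∫ s in a..b, F s x) = ∫ s in Ioc a b, F s x :=
    fun x => intervalIntegral.integral_of_le hab
  simp_rw [e1, e2]
  exact MeasureTheory.integral_integral_swap h2

open Filter

section LiquidTankDev

variable {L g μ m : ℝ}

noncomputable def LTEE (sol : ClassicalSolution L g μ m) (σ x : ℝ) : ℝ :=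
  (1/2) * (sol.h σ x)⁻¹ * (sol.h σ x * sol.v σ x + μ * sol.hx σ x)^2
    + (g/2) * (sol.h σ x - m/L)^2

noncomputable def LTEt (sol : ClassicalSolution L g μ m) (σ x : ℝ) : ℝ :=
  -(1/2) * ((sol.h σ x)⁻¹)^2 * sol.ht σ x
      * (sol.h σ x * sol.v σ x + μ * sol.hx σ x)^2
  + (sol.h σ x)⁻¹ * (sol.h σ x * sol.v σ x + μ * sol.hx σ x)
      * (sol.ht σ x * sol.v σ x + sol.h σ x * sol.vt σ x + μ * sol.hxt σ x)
  + g * (sol.h σ x - m/L) * sol.ht σ x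

noncomputable def LTtgt (sol : ClassicalSolution L g μ m) (σ x : ℝ) : ℝ :=
  -(μ*g) * (sol.hx σ x)^2 + sol.f σ * (sol.h σ x * sol.v σ x + μ * sol.hx σ x)

noncomputable def LTGG (sol : ClassicalSolution L g μ m) (σ x : ℝ) : ℝ :=
  -(1/2) * sol.h σ x * (sol.v σ x)^3 - μ * sol.hx σ x * (sol.v σ x)^2
  - g * (sol.h σ x)^2 * sol.v σ x + g * (m/L) * sol.h σ x * sol.v σ x
  - (μ^2/2) * (sol.hx σ x)^2 * sol.v σ x * (sol.h σ x)⁻¹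

noncomputable def LTGx (sol : ClassicalSolution L g μ m) (σ x : ℝ) : ℝ :=
  -(1/2) * (sol.hx σ x * (sol.v σ x)^3 + 3 * sol.h σ x * (sol.v σ x)^2 * sol.vx σ x)
  - μ * (sol.hxx σ x * (sol.v σ x)^2 + 2 * sol.hx σ x * sol.v σ x * sol.vx σ x)
  - g * (2 * sol.h σ x * sol.hx σ x * sol.v σ x + (sol.h σ x)^2 * sol.vx σ x)
  + g * (m/L) * (sol.hx σ x * sol.v σ x + sol.h σ x * sol.vx σ x)
  - (μ^2/2) * ((2 * sol.hx σ x * sol.hxx σ x * sol.v σ x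
        + (sol.hx σ x)^2 * sol.vx σ x) * (sol.h σ x)⁻¹
      - (sol.hx σ x)^3 * sol.v σ x * ((sol.h σ x)⁻¹)^2)

noncomputable def LTAf (sol : ClassicalSolution L g μ m) (σ x : ℝ) : ℝ :=
  -(sol.hxx σ x * sol.v σ x + 2 * sol.hx σ x * sol.vx σ x + sol.h σ x * sol.vxx σ x)

noncomputable def LTBp (sol : ClassicalSolution L g μ m) (p : ℝ × ℝ) : ℝ :=
  ((sol.ht p.1 p.2 * sol.v p.1 p.2 + sol.h p.1 p.2 * sol.vt p.1 p.2)
    + (sol.hx p.1 p.2 * (sol.v p.1 p.2)^2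
        + 2 * sol.h p.1 p.2 * sol.v p.1 p.2 * sol.vx p.1 p.2
        + g * sol.h p.1 p.2 * sol.hx p.1 p.2)
    - μ * sol.hx p.1 p.2 * sol.vx p.1 p.2 - sol.h p.1 p.2 * sol.f p.1)
    / (μ * sol.h p.1 p.2)

noncomputable def LTTheta (sol : ClassicalSolution L g μ m) (σ : ℝ) : ℝ :=
  ∫ x in (0:ℝ)..L, LTtgt sol σ x

variable (sol : ClassicalSolution L g μ m)

lemma LTh_ne {σ x : ℝ} (hσ : σ ∈ Ici (0:ℝ)) (hx : x ∈ Icc (0:ℝ) L) : sol.h σ x ≠ 0 :=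
  ne_of_gt (sol.h_pos σ hσ x hx)

lemma LTsub31 : (Ioi (0:ℝ) ×ˢ Ioo (0:ℝ) L) ⊆ (Ici (0:ℝ) ×ˢ Icc (0:ℝ) L) :=
  prod_mono Ioi_subset_Ici_self Ioo_subset_Icc_self

lemma LTsub32 : (Ioi (0:ℝ) ×ˢ Ioo (0:ℝ) L) ⊆ (Ioi (0:ℝ) ×ˢ Icc (0:ℝ) L) :=
  prod_mono (fun _ h => h) Ioo_subset_Icc_self

lemma LTcf1 : ContinuousOn (fun p : ℝ × ℝ => sol.f p.1) (Ici (0:ℝ) ×ˢ Icc (0:ℝ) L) :=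
  sol.f_cont.comp continuous_fst.continuousOn (fun p hp => hp.1)

lemma LTcinv : ContinuousOn (fun p : ℝ × ℝ => (sol.h p.1 p.2)⁻¹)
    (Ici (0:ℝ) ×ˢ Icc (0:ℝ) L) :=
  sol.h_cont.inv₀ (fun p hp => LTh_ne sol hp.1 hp.2)

lemma LTcq : ContinuousOn (fun p : ℝ × ℝ => sol.h p.1 p.2 * sol.v p.1 p.2 + μ * sol.hx p.1 p.2)
    (Ici (0:ℝ) ×ˢ Icc (0:ℝ) L) :=
  (sol.h_cont.mul sol.v_cont).add (continuousOn_const.mul sol.hx_cont)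

lemma LTcEE : ContinuousOn (fun p : ℝ × ℝ => LTEE sol p.1 p.2)
    (Ici (0:ℝ) ×ˢ Icc (0:ℝ) L) := by
  unfold LTEE
  exact ((continuousOn_const.mul (LTcinv sol)).mul ((LTcq sol).pow 2)).add
    (continuousOn_const.mul ((sol.h_cont.sub continuousOn_const).pow 2))

lemma LTctgt : ContinuousOn (fun p : ℝ × ℝ => LTtgt sol p.1 p.2)
    (Ici (0:ℝ) ×ˢ Icc (0:ℝ) L) := by
  unfold LTtgt
  exact (continuousOn_const.mul (sol.hx_cont.pow 2)).add ((LTcf1 sol).mul (LTcq sol))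

lemma LTcGG : ContinuousOn (fun p : ℝ × ℝ => LTGG sol p.1 p.2)
    (Ici (0:ℝ) ×ˢ Icc (0:ℝ) L) := by
  unfold LTGG
  exact (((((continuousOn_const.mul sol.h_cont).mul (sol.v_cont.pow 3)).sub
    ((continuousOn_const.mul sol.hx_cont).mul (sol.v_cont.pow 2))).sub
    ((continuousOn_const.mul (sol.h_cont.pow 2)).mul sol.v_cont)).add
    (((continuousOn_const.mul sol.h_cont)).mul sol.v_cont)).sub
    ((((continuousOn_const.mul (sol.hx_cont.pow 2))).mul sol.v_cont).mul (LTcinv sol))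

lemma LTcBp (hμ : 0 < μ) : ContinuousOn (LTBp sol) (Ioi (0:ℝ) ×ˢ Ioo (0:ℝ) L) := by
  unfold LTBp
  have ch := sol.h_cont.mono (LTsub31 (L := L))
  have cv := sol.v_cont.mono (LTsub31 (L := L))
  have chx := sol.hx_cont.mono (LTsub31 (L := L))
  have cht := sol.ht_cont.mono (LTsub31 (L := L))
  have cvt := sol.vt_cont.mono (LTsub32 (L := L))
  have cvx := sol.vx_cont.mono (LTsub32 (L := L))
  have cf := (LTcf1 sol).mono (LTsub31 (L := L))
  refine ContinuousOn.div ?_ (continuousOn_const.mul ch) ?_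
  · exact ((((cht.mul cv).add (ch.mul cvt)).add
      (((chx.mul (cv.pow 2)).add ((continuousOn_const.mul ch).mul cv |>.mul cvx)).add
        ((continuousOn_const.mul ch).mul chx))).sub
      ((continuousOn_const.mul chx).mul cvx)).sub (ch.mul cf)
  · intro p hp
    exact mul_ne_zero (ne_of_gt hμ) (LTh_ne sol (Ioi_subset_Ici_self hp.1) (Ioo_subset_Icc_self hp.2))

lemma LTcGx : ContinuousOn (fun p : ℝ × ℝ => LTGx sol p.1 p.2)
    (Ioi (0:ℝ) ×ˢ Ioo (0:ℝ) L) := by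
  unfold LTGx
  have ch := sol.h_cont.mono (LTsub31 (L := L))
  have cv := sol.v_cont.mono (LTsub31 (L := L))
  have chx := sol.hx_cont.mono (LTsub31 (L := L))
  have cvx := sol.vx_cont.mono (LTsub32 (L := L))
  have chxx := sol.hxx_cont
  have cinv := (LTcinv sol).mono (LTsub31 (L := L))
  exact ((((continuousOn_const.mul ((chx.mul (cv.pow 3)).add
      (((continuousOn_const.mul ch).mul (cv.pow 2)).mul cvx))).sub
    (continuousOn_const.mul ((chxx.mul (cv.pow 2)).add
      (((continuousOn_const.mul chx).mul cv).mul cvx)))).sub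
    (continuousOn_const.mul ((((continuousOn_const.mul ch).mul chx).mul cv).add
      ((ch.pow 2).mul cvx)))).add
    (continuousOn_const.mul ((chx.mul cv).add (ch.mul cvx)))).sub
    (continuousOn_const.mul ((((((continuousOn_const.mul chx).mul chxx).mul cv).add
      ((chx.pow 2).mul cvx)).mul cinv).sub
      (((chx.pow 3).mul cv).mul (cinv.pow 2))))

lemma LTvxx_eq (hμ : 0 < μ) {σ x : ℝ} (hσ : 0 < σ) (hx : x ∈ Ioo (0:ℝ) L) :
    sol.vxx σ x = LTBp sol (σ, x) := by
  have e := sol.mom_eq σ hσ x hx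
  have hne : sol.h σ x ≠ 0 := LTh_ne sol (le_of_lt hσ) (Ioo_subset_Icc_self hx)
  unfold LTBp
  rw [eq_div_iff (mul_ne_zero (ne_of_gt hμ) hne)]
  simp only
  linear_combination -e


lemma LTcAf (hμ : 0 < μ) {t x : ℝ} (ht0 : 0 < t) (hx : x ∈ Ioo (0:ℝ) L) :
    ContinuousAt (fun p : ℝ × ℝ => LTAf sol p.1 p.2) (t, x) := by
  have hopen : IsOpen (Ioi (0:ℝ) ×ˢ Ioo (0:ℝ) L) := isOpen_Ioi.prod isOpen_Ioo
  have hmem : (t, x) ∈ Ioi (0:ℝ) ×ˢ Ioo (0:ℝ) L := ⟨ht0, hx⟩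
  have cA' : ContinuousOn (fun p : ℝ × ℝ =>
      -(sol.hxx p.1 p.2 * sol.v p.1 p.2 + 2 * sol.hx p.1 p.2 * sol.vx p.1 p.2
        + sol.h p.1 p.2 * LTBp sol p)) (Ioi (0:ℝ) ×ˢ Ioo (0:ℝ) L) :=
    (((sol.hxx_cont.mul (sol.v_cont.mono (LTsub31 (L := L)))).add
      ((continuousOn_const.mul (sol.hx_cont.mono (LTsub31 (L := L)))).mul
        (sol.vx_cont.mono (LTsub32 (L := L))))).add
      ((sol.h_cont.mono (LTsub31 (L := L))).mul (LTcBp sol hμ))).neg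
  have hAt : ContinuousAt (fun p : ℝ × ℝ =>
      -(sol.hxx p.1 p.2 * sol.v p.1 p.2 + 2 * sol.hx p.1 p.2 * sol.vx p.1 p.2
        + sol.h p.1 p.2 * LTBp sol p)) (t, x) :=
    cA'.continuousAt (hopen.mem_nhds hmem)
  apply hAt.congr
  filter_upwards [hopen.mem_nhds hmem] with p hp
  unfold LTAf
  rw [LTvxx_eq sol hμ hp.1 hp.2]

lemma LThxt_eq (hμ : 0 < μ) {t x : ℝ} (ht0 : 0 < t) (hxm : x ∈ Ioo (0:ℝ) L) :
    sol.hxt t x = LTAf sol t x := by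
  obtain ⟨hx0, hxL⟩ := hxm
  set δ : ℝ := min t (min x (L - x)) / 2 with hδdef
  have hLx : 0 < L - x := by linarith
  have hδ : 0 < δ := by positivity
  have hm1 : min t (min x (L - x)) ≤ t := min_le_left _ _
  have hm2 : min t (min x (L - x)) ≤ x := le_trans (min_le_right _ _) (min_le_left _ _)
  have hm3 : min t (min x (L - x)) ≤ L - x := le_trans (min_le_right _ _) (min_le_right _ _)
  have hδt : δ ≤ t / 2 := by rw [hδdef]; linarith
  have hδx : δ ≤ x / 2 := by rw [hδdef]; linarith
  have hδL : δ ≤ (L - x) / 2 := by rw [hδdef]; linarith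
  have hT : ∀ σ ∈ Icc (t - δ) (t + δ), 0 < σ := fun σ hσ => by
    have := hσ.1; linarith
  have hX : ∀ y ∈ Icc (x - δ) (x + δ), y ∈ Ioo (0:ℝ) L := fun y hy =>
    ⟨by linarith [hy.1], by linarith [hy.2]⟩
  refine schwarz_aux (H := sol.h) (Ht := sol.ht) (Hx := sol.hx) (A := LTAf sol) hδ ?_ ?_ ?_ (LTcAf sol hμ ht0 ⟨hx0, hxL⟩)
    (sol.hxt_deriv t ht0 x ⟨hx0, hxL⟩)
  · intro σ hσ y hy
    exact (sol.ht_deriv σ (le_of_lt (hT σ hσ)) y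
      (Ioo_subset_Icc_self (hX y hy))).hasDerivAt (Ici_mem_nhds (hT σ hσ))
  · intro σ hσ
    exact (sol.hx_deriv σ (le_of_lt (hT σ hσ)) x
      (Ioo_subset_Icc_self ⟨hx0, hxL⟩)).hasDerivAt (Icc_mem_nhds hx0 hxL)
  · intro σ hσ y hy
    have hσ0 := hT σ hσ
    have hyIoo := hX y hy
    have d1 := sol.hxx_deriv σ hσ0 y hyIoo
    have d2v := (sol.vx_deriv σ hσ0 y (Ioo_subset_Icc_self hyIoo)).hasDerivAt
      (Icc_mem_nhds hyIoo.1 hyIoo.2)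
    have d3 := (sol.hx_deriv σ (le_of_lt hσ0) y (Ioo_subset_Icc_self hyIoo)).hasDerivAt
      (Icc_mem_nhds hyIoo.1 hyIoo.2)
    have d4 := sol.vxx_deriv σ hσ0 y hyIoo
    have base : HasDerivAt (fun z => -(sol.hx σ z * sol.v σ z + sol.h σ z * sol.vx σ z))
        (LTAf sol σ y) y := by
      have := ((d1.mul d2v).add (d3.mul d4)).neg
      refine this.congr_deriv ?_
      unfold LTAf
      ring
    have heq : (fun z => sol.ht σ z) =ᶠ[nhds y]
        (fun z => -(sol.hx σ z * sol.v σ z + sol.h σ z * sol.vx σ z)) := by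
      filter_upwards [Icc_mem_nhds hyIoo.1 hyIoo.2] with z hz
      have := sol.mass_eq σ hσ0 z hz
      linarith
    exact base.congr_of_eventuallyEq heq

lemma LTEtDeriv {σ x : ℝ} (hσ : 0 < σ) (hxm : x ∈ Ioo (0:ℝ) L) :
    HasDerivAt (fun τ => LTEE sol τ x) (LTEt sol σ x) σ := by
  have hxIcc := Ioo_subset_Icc_self hxm
  have hne : sol.h σ x ≠ 0 := LTh_ne sol (le_of_lt hσ) hxIcc
  have dh := (sol.ht_deriv σ (le_of_lt hσ) x hxIcc).hasDerivAt (Ici_mem_nhds hσ)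
  have dv := sol.vt_deriv σ hσ x hxIcc
  have dhx := sol.hxt_deriv σ hσ x hxm
  have dq := (dh.mul dv).add (dhx.const_mul μ)
  have dinv := dh.inv hne
  have := (((dinv.const_mul (1/2 : ℝ)).mul (dq.pow 2)).add
    (((dh.sub_const (m/L)).pow 2).const_mul (g/2)))
  refine this.congr_deriv ?_
  unfold LTEt
  simp only [Pi.mul_apply, Pi.add_apply, Pi.sub_apply, Pi.pow_apply, Pi.inv_apply]
  ring

lemma LTGxDeriv {σ x : ℝ} (hσ : 0 < σ) (hxm : x ∈ Ioo (0:ℝ) L) :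
    HasDerivAt (fun y => LTGG sol σ y) (LTGx sol σ x) x := by
  have hxIcc := Ioo_subset_Icc_self hxm
  have hne : sol.h σ x ≠ 0 := LTh_ne sol (le_of_lt hσ) hxIcc
  have dh := (sol.hx_deriv σ (le_of_lt hσ) x hxIcc).hasDerivAt (Icc_mem_nhds hxm.1 hxm.2)
  have dv := (sol.vx_deriv σ hσ x hxIcc).hasDerivAt (Icc_mem_nhds hxm.1 hxm.2)
  have dhx := sol.hxx_deriv σ hσ x hxm
  have dinv := dh.inv hne
  have t1 := (dh.const_mul (-(1/2):ℝ)).mul (dv.pow 3)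
  have t2 := (dhx.const_mul μ).mul (dv.pow 2)
  have t3 := ((dh.pow 2).const_mul g).mul dv
  have t4 := (dh.const_mul (g*(m/L))).mul dv
  have t5 := (((dhx.pow 2).const_mul (μ^2/2)).mul dv).mul dinv
  have total := (((t1.sub t2).sub t3).add t4).sub t5
  refine total.congr_deriv ?_
  unfold LTGx
  push_cast
  simp only [Pi.mul_apply, Pi.add_apply, Pi.sub_apply, Pi.pow_apply, Pi.inv_apply]
  ring

lemma LTEtEq (hμ : 0 < μ) {σ x : ℝ} (hσ : 0 < σ) (hxm : x ∈ Ioo (0:ℝ) L) :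
    LTEt sol σ x = LTtgt sol σ x + LTGx sol σ x := by
  have hxIcc := Ioo_subset_Icc_self hxm
  have hne : sol.h σ x ≠ 0 := LTh_ne sol (le_of_lt hσ) hxIcc
  have e1 := sol.mass_eq σ hσ x hxIcc
  have e2 := sol.mom_eq σ hσ x hxm
  have e3 : sol.hxt σ x = -(sol.hxx σ x * sol.v σ x + 2 * sol.hx σ x * sol.vx σ x
      + sol.h σ x * sol.vxx σ x) := LThxt_eq sol hμ hσ hxm
  have ht_val : sol.ht σ x = -(sol.hx σ x * sol.v σ x + sol.h σ x * sol.vx σ x) := by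
    linarith
  have vt_val : sol.vt σ x = (μ * (sol.hx σ x * sol.vx σ x + sol.h σ x * sol.vxx σ x)
      + sol.h σ x * sol.f σ - (sol.hx σ x * (sol.v σ x)^2
        + 2 * sol.h σ x * sol.v σ x * sol.vx σ x + g * sol.h σ x * sol.hx σ x)
      + (sol.hx σ x * sol.v σ x + sol.h σ x * sol.vx σ x) * sol.v σ x) / sol.h σ x := by
    rw [eq_div_iff hne]
    linear_combination e2 - sol.v σ x * e1
  unfold LTEt LTtgt LTGx
  rw [ht_val, vt_val, e3]
  field_simp
  ring


lemma LTsliceT {a b x : ℝ} (F : ℝ × ℝ → ℝ) (hF : ContinuousOn F (Ici (0:ℝ) ×ˢ Icc (0:ℝ) L))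
    (ha : 0 ≤ a) (hx : x ∈ Icc (0:ℝ) L) :
    ContinuousOn (fun σ => F (σ, x)) (Icc a b) :=
  hF.comp (continuous_id.prodMk continuous_const).continuousOn
    (fun σ hσ => mk_mem_prod (le_trans ha hσ.1) hx)

lemma LTsliceX {τ : ℝ} (F : ℝ × ℝ → ℝ) (hF : ContinuousOn F (Ici (0:ℝ) ×ˢ Icc (0:ℝ) L))
    (hτ : 0 ≤ τ) :
    ContinuousOn (fun x => F (τ, x)) (Icc (0:ℝ) L) :=
  hF.comp (continuous_const.prodMk continuous_id).continuousOn
    (fun x hx => mk_mem_prod hτ hx)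

lemma LTsliceT3 {a b x : ℝ} (F : ℝ × ℝ → ℝ)
    (hF : ContinuousOn F (Ioi (0:ℝ) ×ˢ Ioo (0:ℝ) L))
    (ha : 0 < a) (hx : x ∈ Ioo (0:ℝ) L) :
    ContinuousOn (fun σ => F (σ, x)) (Icc a b) :=
  hF.comp (continuous_id.prodMk continuous_const).continuousOn
    (fun σ hσ => mk_mem_prod (lt_of_lt_of_le ha hσ.1) hx)

set_option maxHeartbeats 2000000 in
lemma LTkey (hL : 0 < L) (hμ : 0 < μ) {τ1 τ2 : ℝ} (hτ1 : 0 < τ1) (h12 : τ1 ≤ τ2) :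
    (∫ x in (0:ℝ)..L, LTEE sol τ2 x) - (∫ x in (0:ℝ)..L, LTEE sol τ1 x)
      = ∫ σ in τ1..τ2, LTTheta sol σ := by
  have hIoi : Icc τ1 τ2 ⊆ Ioi (0:ℝ) := fun σ hσ => lt_of_lt_of_le hτ1 hσ.1
  have uIccE : uIcc τ1 τ2 = Icc τ1 τ2 := uIcc_of_le h12
  have uIocE : uIoc τ1 τ2 = Ioc τ1 τ2 := uIoc_of_le h12
  have uIccL : uIcc (0:ℝ) L = Icc 0 L := uIcc_of_le hL.le
  have uIocL : uIoc (0:ℝ) L = Ioc 0 L := uIoc_of_le hL.le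
  -- pointwise identity
  have ptwise : ∀ x ∈ Ioo (0:ℝ) L, LTEE sol τ2 x - LTEE sol τ1 x
      = (∫ σ in τ1..τ2, LTtgt sol σ x) + (∫ σ in τ1..τ2, LTGx sol σ x) := by
    intro x hx
    have hxIcc := Ioo_subset_Icc_self hx
    have hEt : ∀ σ ∈ uIcc τ1 τ2, HasDerivAt (fun τ => LTEE sol τ x) (LTEt sol σ x) σ :=
      fun σ hσ => LTEtDeriv sol (hIoi (uIccE ▸ hσ)) hx
    have ceq : EqOn (fun σ => LTEt sol σ x) (fun σ => LTtgt sol σ x + LTGx sol σ x)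
        (Icc τ1 τ2) := fun σ hσ => LTEtEq sol hμ (hIoi hσ) hx
    have ctgtx : ContinuousOn (fun σ => LTtgt sol σ x) (Icc τ1 τ2) :=
      LTsliceT (fun p => LTtgt sol p.1 p.2) (LTctgt sol) hτ1.le hxIcc
    have cGxx : ContinuousOn (fun σ => LTGx sol σ x) (Icc τ1 τ2) :=
      LTsliceT3 (fun p => LTGx sol p.1 p.2) (LTcGx sol) hτ1 hx
    have cEtx : ContinuousOn (fun σ => LTEt sol σ x) (Icc τ1 τ2) :=
      (ctgtx.add cGxx).congr ceq
    have iEt : IntervalIntegrable (fun σ => LTEt sol σ x) volume τ1 τ2 := by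
      apply ContinuousOn.intervalIntegrable; rwa [uIccE]
    have itgt : IntervalIntegrable (fun σ => LTtgt sol σ x) volume τ1 τ2 := by
      apply ContinuousOn.intervalIntegrable; rwa [uIccE]
    have iGx : IntervalIntegrable (fun σ => LTGx sol σ x) volume τ1 τ2 := by
      apply ContinuousOn.intervalIntegrable; rwa [uIccE]
    have ftc := intervalIntegral.integral_eq_sub_of_hasDerivAt hEt iEt
    have split : ∫ σ in τ1..τ2, LTEt sol σ x
        = (∫ σ in τ1..τ2, LTtgt sol σ x) + (∫ σ in τ1..τ2, LTGx sol σ x) := by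
      rw [intervalIntegral.integral_congr (uIccE ▸ ceq : EqOn _ _ (uIcc τ1 τ2)),
        intervalIntegral.integral_add itgt iGx]
    rw [← ftc, split]
  -- derivative of the σ-integral of GG
  have gderiv : ∀ x ∈ Ioo (0:ℝ) L, HasDerivAt (fun y => ∫ σ in τ1..τ2, LTGG sol σ y)
      (∫ σ in τ1..τ2, LTGx sol σ x) x := by
    intro x hx
    obtain ⟨hx0, hxL⟩ := hx
    set ε : ℝ := min x (L - x) / 2 with hεdef
    have hLx : 0 < L - x := by linarith
    have hε : 0 < ε := by positivity
    have hεx : ε ≤ x / 2 := by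
      rw [hεdef]; have := min_le_left x (L - x); linarith
    have hεL : ε ≤ (L - x) / 2 := by
      rw [hεdef]; have := min_le_right x (L - x); linarith
    have hIccIoo : Icc (x - ε) (x + ε) ⊆ Ioo (0:ℝ) L := fun y hy =>
      ⟨by linarith [hy.1], by linarith [hy.2]⟩
    have ballIcc : Metric.ball x ε ⊆ Icc (x - ε) (x + ε) := fun y hy => by
      rw [Metric.mem_ball, Real.dist_eq] at hy
      have := abs_lt.1 hy
      exact ⟨by linarith [this.1], by linarith [this.2]⟩
    have KsubS3 : Icc τ1 τ2 ×ˢ Icc (x - ε) (x + ε) ⊆ Ioi (0:ℝ) ×ˢ Ioo (0:ℝ) L :=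
      prod_mono hIoi hIccIoo
    obtain ⟨C, hC⟩ := (isCompact_Icc.prod isCompact_Icc).exists_bound_of_continuousOn
      ((LTcGx sol).mono KsubS3)
    refine (intervalIntegral.hasDerivAt_integral_of_dominated_loc_of_deriv_le
      (F := fun y σ => LTGG sol σ y) (F' := fun y σ => LTGx sol σ y)
      (bound := fun _ => C) (Metric.ball_mem_nhds x hε) ?_ ?_ ?_ ?_ ?_ ?_).2
    · filter_upwards [Metric.ball_mem_nhds x hε] with y hy
      have hyIcc : y ∈ Icc (0:ℝ) L := Ioo_subset_Icc_self (hIccIoo (ballIcc hy))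
      have : ContinuousOn (fun σ => LTGG sol σ y) (Icc τ1 τ2) :=
        LTsliceT (fun p => LTGG sol p.1 p.2) (LTcGG sol) hτ1.le hyIcc
      exact (this.mono (by rw [uIocE]; exact Ioc_subset_Icc_self)).aestronglyMeasurable
        measurableSet_uIoc
    · apply ContinuousOn.intervalIntegrable
      rw [uIccE]
      exact LTsliceT (fun p => LTGG sol p.1 p.2) (LTcGG sol) hτ1.le (Ioo_subset_Icc_self (hIccIoo
        (ballIcc (Metric.mem_ball_self hε))))
    · have : ContinuousOn (fun σ => LTGx sol σ x) (Icc τ1 τ2) :=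
        LTsliceT3 (fun p => LTGx sol p.1 p.2) (LTcGx sol) hτ1 ⟨hx0, hxL⟩
      exact (this.mono (by rw [uIocE]; exact Ioc_subset_Icc_self)).aestronglyMeasurable
        measurableSet_uIoc
    · filter_upwards [] with σ
      intro hσ y hy
      have : (σ, y) ∈ Icc τ1 τ2 ×ˢ Icc (x - ε) (x + ε) :=
        mk_mem_prod (by rw [uIocE] at hσ; exact Ioc_subset_Icc_self hσ) (ballIcc hy)
      exact hC _ this
    · exact intervalIntegrable_const
    · filter_upwards [] with σ
      intro hσ y hy
      have hσ0 : 0 < σ := by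
        rw [uIocE] at hσ; exact lt_trans hτ1 hσ.1
      exact LTGxDeriv sol hσ0 (hIccIoo (ballIcc hy))
  -- continuity and boundary values of the σ-integral of GG
  have gcont : ContinuousOn (fun y => ∫ σ in τ1..τ2, LTGG sol σ y) (Icc (0:ℝ) L) := by
    apply continuousOn_param_integral (F := fun y σ => LTGG sol σ y)
    exact (LTcGG sol).comp continuous_swap.continuousOn
      (fun p hp => mk_mem_prod (le_trans hτ1.le (uIccE ▸ hp.2).1) hp.1)
  have gval : ∀ z : ℝ, sol.v τ1 z = 0 → (∀ σ ∈ uIcc τ1 τ2, sol.v σ z = 0) →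
      (∫ σ in τ1..τ2, LTGG sol σ z) = 0 := by
    intro z _ hv
    have : EqOn (fun σ => LTGG sol σ z) (fun _ => (0:ℝ)) (uIcc τ1 τ2) := by
      intro σ hσ
      simp only
      unfold LTGG
      rw [hv σ hσ]
      ring
    rw [intervalIntegral.integral_congr this]
    exact intervalIntegral.integral_zero
  have hvmem : ∀ σ ∈ uIcc τ1 τ2, σ ∈ Ici (0:ℝ) := fun σ hσ =>
    le_trans hτ1.le (uIccE ▸ hσ).1
  have g0 : (∫ σ in τ1..τ2, LTGG sol σ 0) = 0 :=
    gval 0 (sol.bc0 τ1 hτ1.le) (fun σ hσ => sol.bc0 σ (hvmem σ hσ))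
  have gL : (∫ σ in τ1..τ2, LTGG sol σ L) = 0 :=
    gval L (sol.bcL τ1 hτ1.le) (fun σ hσ => sol.bcL σ (hvmem σ hσ))
  -- a.e. avoidance of the endpoint L
  have hae : ∀ᵐ z : ℝ ∂(volume : Measure ℝ), z ≠ L := by
    rw [ae_iff]
    have : {z : ℝ | ¬ z ≠ L} = {L} := by ext z; simp
    rw [this]
    exact measure_singleton L
  -- continuity of ψ and EE slices
  have ψcont : ContinuousOn (fun x => ∫ σ in τ1..τ2, LTtgt sol σ x) (Icc (0:ℝ) L) := by
    apply continuousOn_param_integral (F := fun x σ => LTtgt sol σ x)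
    exact (LTctgt sol).comp continuous_swap.continuousOn
      (fun p hp => mk_mem_prod (le_trans hτ1.le (uIccE ▸ hp.2).1) hp.1)
  have cEE1 : ContinuousOn (fun x => LTEE sol τ1 x) (Icc (0:ℝ) L) :=
    LTsliceX (fun p => LTEE sol p.1 p.2) (LTcEE sol) hτ1.le
  have cEE2 : ContinuousOn (fun x => LTEE sol τ2 x) (Icc (0:ℝ) L) :=
    LTsliceX (fun p => LTEE sol p.1 p.2) (LTcEE sol) (le_trans hτ1.le h12)
  have φcont : ContinuousOn (fun x => (LTEE sol τ2 x - LTEE sol τ1 x)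
      - ∫ σ in τ1..τ2, LTtgt sol σ x) (Icc (0:ℝ) L) := (cEE2.sub cEE1).sub ψcont
  -- integrability of K
  have Kint : IntervalIntegrable (fun x => ∫ σ in τ1..τ2, LTGx sol σ x) volume 0 L := by
    rw [intervalIntegrable_iff_integrableOn_Ioc_of_le hL.le]
    have hφint : IntegrableOn (fun x => (LTEE sol τ2 x - LTEE sol τ1 x)
        - ∫ σ in τ1..τ2, LTtgt sol σ x) (Ioc 0 L) volume :=
      (φcont.integrableOn_compact isCompact_Icc).mono_set Ioc_subset_Icc_self
    refine hφint.congr_fun_ae ?_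
    have h1 : ∀ᵐ z ∂(volume.restrict (Ioc (0:ℝ) L)), z ∈ Ioc (0:ℝ) L :=
      ae_restrict_mem measurableSet_Ioc
    filter_upwards [h1, ae_restrict_of_ae hae] with z hz hzL
    have hzIoo : z ∈ Ioo (0:ℝ) L := ⟨hz.1, lt_of_le_of_ne hz.2 hzL⟩
    have := ptwise z hzIoo
    linarith
  -- FTC in space: ∫ K = 0
  have intK : (∫ x in (0:ℝ)..L, ∫ σ in τ1..τ2, LTGx sol σ x) = 0 := by
    have hmm : Ioo ((0:ℝ) ⊓ L) ((0:ℝ) ⊔ L) = Ioo (0:ℝ) L := by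
      rw [min_eq_left hL.le, max_eq_right hL.le]
    have := intervalIntegral.integral_eq_sub_of_hasDeriv_right
      (f := fun y => ∫ σ in τ1..τ2, LTGG sol σ y)
      (f' := fun x => ∫ σ in τ1..τ2, LTGx sol σ x)
      (by rw [uIccL]; exact gcont)
      (by intro x hx
          rw [hmm] at hx
          exact (gderiv x hx).hasDerivWithinAt) Kint
    beta_reduce at this
    rw [g0, gL, sub_zero] at this
    exact this
  -- integrability of the pieces
  have iEE1 : IntervalIntegrable (fun x => LTEE sol τ1 x) volume 0 L := by
    apply ContinuousOn.intervalIntegrable; rwa [uIccL]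
  have iEE2 : IntervalIntegrable (fun x => LTEE sol τ2 x) volume 0 L := by
    apply ContinuousOn.intervalIntegrable; rwa [uIccL]
  have iψ : IntervalIntegrable (fun x => ∫ σ in τ1..τ2, LTtgt sol σ x) volume 0 L := by
    apply ContinuousOn.intervalIntegrable; rwa [uIccL]
  calc (∫ x in (0:ℝ)..L, LTEE sol τ2 x) - (∫ x in (0:ℝ)..L, LTEE sol τ1 x)
      = ∫ x in (0:ℝ)..L, (LTEE sol τ2 x - LTEE sol τ1 x) :=
        (intervalIntegral.integral_sub iEE2 iEE1).symm
    _ = ∫ x in (0:ℝ)..L, ((∫ σ in τ1..τ2, LTtgt sol σ x)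
          + (∫ σ in τ1..τ2, LTGx sol σ x)) := by
        apply intervalIntegral.integral_congr_ae
        filter_upwards [hae] with x hxne
        intro hxmem
        rw [uIocL] at hxmem
        exact ptwise x ⟨hxmem.1, lt_of_le_of_ne hxmem.2 hxne⟩
    _ = (∫ x in (0:ℝ)..L, ∫ σ in τ1..τ2, LTtgt sol σ x)
          + (∫ x in (0:ℝ)..L, ∫ σ in τ1..τ2, LTGx sol σ x) :=
        intervalIntegral.integral_add iψ Kint
    _ = ∫ x in (0:ℝ)..L, ∫ σ in τ1..τ2, LTtgt sol σ x := by rw [intK, add_zero]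
    _ = ∫ σ in τ1..τ2, LTTheta sol σ := by
        simp only [LTTheta]
        exact (interval_integral_swap_cont h12 hL.le ((LTctgt sol).mono
          (prod_mono (fun σ hσ => le_trans hτ1.le hσ.1) subset_rfl))).symm


lemma LTThetaEq (hL : 0 < L) {σ : ℝ} (hσ : 0 ≤ σ) :
    LTTheta sol σ = -(μ * g) * (∫ x in (0:ℝ)..L, (sol.hx σ x)^2)
      + sol.f σ * (∫ x in (0:ℝ)..L, (sol.h σ x * sol.v σ x + μ * sol.hx σ x)) := by
  have uIccL : uIcc (0:ℝ) L = Icc 0 L := uIcc_of_le hL.le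
  have c1 : ContinuousOn (fun x => (sol.hx σ x)^2) (Icc (0:ℝ) L) :=
    (LTsliceX (fun p => sol.hx p.1 p.2) sol.hx_cont hσ).pow 2
  have c2 : ContinuousOn (fun x => sol.h σ x * sol.v σ x + μ * sol.hx σ x) (Icc (0:ℝ) L) :=
    LTsliceX (fun p => sol.h p.1 p.2 * sol.v p.1 p.2 + μ * sol.hx p.1 p.2) (LTcq sol) hσ
  have i1 : IntervalIntegrable (fun x => -(μ * g) * (sol.hx σ x)^2) volume 0 L := by
    apply ContinuousOn.intervalIntegrable
    rw [uIccL]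
    exact continuousOn_const.mul c1
  have i2 : IntervalIntegrable
      (fun x => sol.f σ * (sol.h σ x * sol.v σ x + μ * sol.hx σ x)) volume 0 L := by
    apply ContinuousOn.intervalIntegrable
    rw [uIccL]
    exact continuousOn_const.mul c2
  unfold LTTheta LTtgt
  rw [intervalIntegral.integral_add i1 i2, intervalIntegral.integral_const_mul,
    intervalIntegral.integral_const_mul]

lemma LTWrepr (hL : 0 < L) {τ : ℝ} (hτ : 0 ≤ τ) :
    (1/2) * (∫ x in (0:ℝ)..L,
        (sol.h τ x)⁻¹ * (sol.h τ x * sol.v τ x + μ * sol.hx τ x)^2)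
      + (g/2) * (∫ x in (0:ℝ)..L, (sol.h τ x - m/L)^2)
      = ∫ x in (0:ℝ)..L, LTEE sol τ x := by
  have uIccL : uIcc (0:ℝ) L = Icc 0 L := uIcc_of_le hL.le
  have cinv : ContinuousOn (fun x => (sol.h τ x)⁻¹) (Icc (0:ℝ) L) :=
    LTsliceX (fun p => (sol.h p.1 p.2)⁻¹) (LTcinv sol) hτ
  have cq : ContinuousOn (fun x => sol.h τ x * sol.v τ x + μ * sol.hx τ x) (Icc (0:ℝ) L) :=
    LTsliceX (fun p => sol.h p.1 p.2 * sol.v p.1 p.2 + μ * sol.hx p.1 p.2) (LTcq sol) hτ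
  have ch : ContinuousOn (fun x => sol.h τ x) (Icc (0:ℝ) L) :=
    LTsliceX (fun p => sol.h p.1 p.2) sol.h_cont hτ
  have i1 : IntervalIntegrable
      (fun x => (1/2) * ((sol.h τ x)⁻¹ * (sol.h τ x * sol.v τ x + μ * sol.hx τ x)^2))
      volume 0 L := by
    apply ContinuousOn.intervalIntegrable
    rw [uIccL]
    exact continuousOn_const.mul (cinv.mul (cq.pow 2))
  have i2 : IntervalIntegrable (fun x => (g/2) * (sol.h τ x - m/L)^2) volume 0 L := by
    apply ContinuousOn.intervalIntegrable
    rw [uIccL]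
    exact continuousOn_const.mul ((ch.sub continuousOn_const).pow 2)
  rw [← intervalIntegral.integral_const_mul, ← intervalIntegral.integral_const_mul,
    ← intervalIntegral.integral_add i1 i2]
  apply intervalIntegral.integral_congr
  intro x _
  unfold LTEE
  ring

end LiquidTankDev

theorem stmt17 (L g μ m : ℝ) (hL : 0 < L) (hg : 0 < g) (hμ : 0 < μ) (hm : 0 < m)
    (sol : ClassicalSolution L g μ m) :
    ∀ t > (0:ℝ),
      HasDerivAt
        (fun τ => (1/2) * (∫ x in (0:ℝ)..L,
            (sol.h τ x)⁻¹ * (sol.h τ x * sol.v τ x + μ * sol.hx τ x)^2)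
          + (g/2) * (∫ x in (0:ℝ)..L, (sol.h τ x - m/L)^2))
        (-(μ * g) * (∫ x in (0:ℝ)..L, (sol.hx t x)^2)
          + sol.f t * (∫ x in (0:ℝ)..L, (sol.h t x * sol.v t x + μ * sol.hx t x))) t := by
  intro t ht0
  have ht4 : (0:ℝ) < t/4 := by linarith
  have ht2 : (0:ℝ) < t/2 := by linarith
  -- continuity of Theta near t
  have cTheta : ContinuousOn (LTTheta sol) (Icc (t/4) (t+1)) := by
    apply continuousOn_param_integral (F := LTtgt sol)
    refine (LTctgt sol).mono ?_
    refine prod_mono (fun σ hσ => le_trans ht4.le hσ.1) ?_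
    rw [uIcc_of_le hL.le]
  have hIoo : t ∈ Ioo (t/4) (t+1) := ⟨by linarith, by linarith⟩
  have cThetaOpen : ContinuousOn (LTTheta sol) (Ioo (t/4) (t+1)) :=
    cTheta.mono Ioo_subset_Icc_self
  have hmeas : StronglyMeasurableAtFilter (LTTheta sol) (nhds t) volume :=
    cThetaOpen.stronglyMeasurableAtFilter isOpen_Ioo t hIoo
  have cAt : ContinuousAt (LTTheta sol) t :=
    (cThetaOpen t hIoo).continuousAt (isOpen_Ioo.mem_nhds hIoo)
  have hint : IntervalIntegrable (LTTheta sol) volume (t/2) t := by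
    apply ContinuousOn.intervalIntegrable
    refine cTheta.mono ?_
    rw [uIcc_of_le (by linarith : t/2 ≤ t)]
    exact Icc_subset_Icc (by linarith) (by linarith)
  have hW' : HasDerivAt (fun τ => ∫ σ in (t/2)..τ, LTTheta sol σ) (LTTheta sol t) t :=
    intervalIntegral.integral_hasDerivAt_right hint hmeas cAt
  have hW2 : HasDerivAt (fun τ => (∫ x in (0:ℝ)..L, LTEE sol (t/2) x)
      + ∫ σ in (t/2)..τ, LTTheta sol σ) (LTTheta sol t) t := hW'.const_add _
  have heq : (fun τ => (1/2) * (∫ x in (0:ℝ)..L,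
        (sol.h τ x)⁻¹ * (sol.h τ x * sol.v τ x + μ * sol.hx τ x)^2)
      + (g/2) * (∫ x in (0:ℝ)..L, (sol.h τ x - m/L)^2))
      =ᶠ[nhds t] (fun τ => (∫ x in (0:ℝ)..L, LTEE sol (t/2) x)
        + ∫ σ in (t/2)..τ, LTTheta sol σ) := by
    filter_upwards [Ioi_mem_nhds ht0] with τ hτ
    have hτ0 : (0:ℝ) < τ := hτ
    rw [LTWrepr sol hL hτ0.le]
    rcases le_total (t/2) τ with hcase | hcase
    · have := LTkey sol hL hμ ht2 hcase
      linarith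
    · have := LTkey sol hL hμ hτ0 hcase
      have hsymm : (∫ σ in (t/2)..τ, LTTheta sol σ)
          = -(∫ σ in τ..(t/2), LTTheta sol σ) := by
        rw [intervalIntegral.integral_symm]
      rw [hsymm]
      linarith
  have final := hW2.congr_of_eventuallyEq heq
  rwa [LTThetaEq sol hL ht0.le] at final
end
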